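/- arXiv:1909.13120 — 9 statements merged into one kernel-verified Lean document; each statement's English description precedes it below -/
import Mathlib

section
/- If S ⊆ ℕ^d is a symmetric GNS with Frobenius element f = (f^(1),...,f^(d)), then e(S)·n(S) ≥ d·(f^(1)+1)···(f^(d)+1). -/
/-- The minimal generating set of a GNS: `G(S) = S* \ (S* + S*)`. -/
def gensSet {d : ℕ} (S : Set (Fin d → ℕ)) : Set (Fin d → ℕ) :=
  (S \ {0}) \ {x | ∃ a ∈ S \ {0}, ∃ b ∈ S \ {0}, x = a + b}

/-- `e(S)`: number of minimal generators. -/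
noncomputable def eNum {d : ℕ} (S : Set (Fin d → ℕ)) : ℕ := (gensSet S).ncard

/-- `C(S) = {x ∈ ℕ^d : x ≤ h for some hole h}` (componentwise order). -/
def CSet {d : ℕ} (S : Set (Fin d → ℕ)) : Set (Fin d → ℕ) := {x | ∃ h ∈ Sᶜ, x ≤ h}

/-- `n(S) = |S ∩ C(S)|`. -/
noncomputable def nNum {d : ℕ} (S : Set (Fin d → ℕ)) : ℕ := (S ∩ CSet S).ncard


section Aux
variable {d : ℕ} {S : Set (Fin d → ℕ)}

lemma sum_pos_of_ne_zero {x : Fin d → ℕ} (hx : x ≠ 0) : 1 ≤ ∑ j, x j := by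
  by_contra h
  push_neg at h
  apply hx
  have hz : ∑ j, x j = 0 := by omega
  funext j
  exact Finset.sum_eq_zero_iff.mp hz j (Finset.mem_univ j)

lemma mem_gens {x : Fin d → ℕ} (hx : x ∈ S) (hx0 : x ≠ 0)
    (h : ∀ a, a ∈ S → a ≠ 0 → ∀ b, b ∈ S → b ≠ 0 → x ≠ a + b) : x ∈ gensSet S := by
  refine ⟨⟨hx, by simpa using hx0⟩, ?_⟩
  intro hmem
  simp only [Set.mem_setOf_eq] at hmem
  obtain ⟨a, ⟨ha, ha0⟩, b, ⟨hb, hb0⟩, hab⟩ := hmem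
  exact h a ha (by simpa using ha0) b hb (by simpa using hb0) hab

lemma exists_bound (hfin : Sᶜ.Finite) : ∃ N, 0 < N ∧ ∀ x, x ∉ S → ∀ i, x i < N := by
  classical
  refine ⟨(hfin.toFinset.sup fun x => Finset.univ.sup x) + 1, Nat.succ_pos _, ?_⟩
  intro x hx i
  have hx' : x ∈ hfin.toFinset := by simpa using hx
  have h1 : x i ≤ Finset.univ.sup x := Finset.le_sup (Finset.mem_univ i)
  have h2 : Finset.univ.sup x ≤ hfin.toFinset.sup (fun x => Finset.univ.sup x) :=
    Finset.le_sup hx'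
  omega

/-- Descent: if all unit vectors with index in `A` are in `S`, every vector supported
on `A` is in `S`. -/
lemma descent (h0 : 0 ∈ S) (hadd : ∀ a ∈ S, ∀ b ∈ S, a + b ∈ S)
    (A : Finset (Fin d)) (hA : ∀ i ∈ A, Pi.single i 1 ∈ S) :
    ∀ n (x : Fin d → ℕ), (∑ j, x j) = n → (∀ j, j ∉ A → x j = 0) → x ∈ S := by
  intro n
  induction n using Nat.strong_induction_on with
  | _ n ih =>
    intro x hsum hsupp
    rcases Nat.eq_zero_or_pos n with hn | hn
    · have : x = 0 := by
        funext j
        exact Finset.sum_eq_zero_iff.mp (hsum.trans hn) j (Finset.mem_univ j)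
      rwa [this]
    · have hex : ∃ i, 1 ≤ x i := by
        by_contra hc
        push_neg at hc
        have : ∑ j, x j = 0 := Finset.sum_eq_zero (fun j _ => by have := hc j; omega)
        omega
      obtain ⟨i, hi⟩ := hex
      have hiA : i ∈ A := by
        by_contra hiA
        have := hsupp i hiA
        omega
      have hdecomp : x = (x - Pi.single i 1) + Pi.single i 1 := by
        funext j
        simp only [Pi.add_apply, Pi.sub_apply, Pi.single_apply]
        by_cases hji : j = i
        · subst hji; simp; omega
        · simp [hji]
      have hsum' : ∑ j, (x - Pi.single i 1 : Fin d → ℕ) j = n - 1 := by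
        have : ∑ j, (x - Pi.single i 1 : Fin d → ℕ) j = (∑ j, x j) - (∑ j, (Pi.single i 1 : Fin d → ℕ) j) := by
          rw [← Finset.sum_tsub_distrib]
          · rfl
          · intro j _
            simp only [Pi.single_apply]
            by_cases hji : j = i
            · subst hji; simp; omega
            · simp [hji]
        rw [this, Finset.sum_pi_single']
        simp [hsum]
      have hsupp' : ∀ j, j ∉ A → (x - Pi.single i 1 : Fin d → ℕ) j = 0 := by
        intro j hj
        simp [Pi.sub_apply, hsupp j hj]
      have hxm : x - Pi.single i 1 ∈ S := ih (n-1) (by omega) _ hsum' hsupp'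
      rw [hdecomp]
      exact hadd _ hxm _ (hA i hiA)


/-- If `e_i ∉ S`, the axis `i` contains two distinct minimal generators. -/
lemma axis_two (h0 : 0 ∈ S) (hfin : Sᶜ.Finite) (i : Fin d)
    (hei : Pi.single i 1 ∉ S) :
    ∃ g₁ g₂ : Fin d → ℕ, g₁ ∈ gensSet S ∧ g₂ ∈ gensSet S ∧ g₁ ≠ g₂ ∧
      (∀ j, j ≠ i → g₁ j = 0) ∧ (∀ j, j ≠ i → g₂ j = 0) ∧ 1 ≤ g₁ i ∧ 1 ≤ g₂ i := by
  classical
  obtain ⟨N, hN0, hN⟩ := exists_bound hfin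
  have hbig : ∀ n, N ≤ n → Pi.single i n ∈ S := by
    intro n hn
    by_contra hc
    have := hN _ hc i
    simp at this
    omega
  -- axis decomposition helper
  have haxis : ∀ x a b : Fin d → ℕ, (∀ j, j ≠ i → x j = 0) → x = a + b →
      a = Pi.single i (a i) ∧ b = Pi.single i (b i) := by
    intro x a b hx hab
    constructor
    · funext j
      by_cases hji : j = i
      · subst hji; simp
      · have := congrFun hab j
        simp only [Pi.add_apply] at this
        have := hx j hji
        simp [Pi.single_apply, hji]
        omega
    · funext j
      by_cases hji : j = i
      · subst hji; simp
      · have := congrFun hab j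
        simp only [Pi.add_apply] at this
        have := hx j hji
        simp [Pi.single_apply, hji]
        omega
  have hPex : ∃ n, 0 < n ∧ Pi.single i n ∈ S := ⟨N, hN0, hbig N le_rfl⟩
  set m := Nat.find hPex with hm
  obtain ⟨hm0, hmS⟩ : 0 < m ∧ Pi.single i m ∈ S := Nat.find_spec hPex
  have hm1 : 1 < m := by
    by_contra hc
    have hmeq : m = 1 := by omega
    rw [hmeq] at hmS
    exact hei hmS
  have hzero : ∀ c : Fin d → ℕ, c = Pi.single i (c i) → c i = 0 → c = 0 := by
    intro c hcc hci
    rw [hci] at hcc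
    simpa using hcc
  have hg1 : Pi.single i m ∈ gensSet S := by
    apply mem_gens hmS
    · intro hz
      have := congrFun hz i
      simp at this
      omega
    · intro a ha ha0 b hb hb0 hab
      obtain ⟨haa, hbb⟩ := haxis _ a b (fun j hj => by simp [Pi.single_apply, hj]) hab
      have hai : 0 < a i := by
        rcases Nat.eq_zero_or_pos (a i) with hc | hc
        · exact absurd (hzero a haa hc) ha0
        · exact hc
      have hbi : 0 < b i := by
        rcases Nat.eq_zero_or_pos (b i) with hc | hc
        · exact absurd (hzero b hbb hc) hb0
        · exact hc
      have hsum : a i + b i = m := by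
        have := congrFun hab i
        simp at this
        omega
      have := Nat.find_min hPex (m := a i) (by omega) ⟨hai, by rw [← haa]; exact ha⟩
      exact this
  -- second generator: minimal n with n e_i ∈ S and m ∤ n
  have hQex : ∃ n, 0 < n ∧ Pi.single i n ∈ S ∧ ¬ (m ∣ n) := by
    by_cases hdvd : m ∣ N
    · refine ⟨N + 1, by omega, hbig _ (by omega), ?_⟩
      intro hc
      have h1 : m ∣ 1 := by
        have h2 := Nat.dvd_sub hc hdvd
        simpa using h2
      have := Nat.dvd_one.mp h1
      omega
    · exact ⟨N, hN0, hbig N le_rfl, hdvd⟩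
  set r := Nat.find hQex with hr
  obtain ⟨hr0, hrS, hrd⟩ : 0 < r ∧ Pi.single i r ∈ S ∧ ¬ (m ∣ r) := Nat.find_spec hQex
  have hg2 : Pi.single i r ∈ gensSet S := by
    apply mem_gens hrS
    · intro hz
      have := congrFun hz i
      simp at this
      omega
    · intro a ha ha0 b hb hb0 hab
      obtain ⟨haa, hbb⟩ := haxis _ a b (fun j hj => by simp [Pi.single_apply, hj]) hab
      have hai : 0 < a i := by
        rcases Nat.eq_zero_or_pos (a i) with hc | hc
        · exact absurd (hzero a haa hc) ha0
        · exact hc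
      have hbi : 0 < b i := by
        rcases Nat.eq_zero_or_pos (b i) with hc | hc
        · exact absurd (hzero b hbb hc) hb0
        · exact hc
      have hsum : a i + b i = r := by
        have := congrFun hab i
        simp at this
        omega
      -- both a i and b i are ≥ m and divisible by m, else contradiction with minimality of m or r
      have hdiv : ∀ c : Fin d → ℕ, c ∈ S → c = Pi.single i (c i) → 0 < c i → c i < r → m ∣ c i := by
        intro c hc hcc hc0 hcr
        by_contra hnd
        exact Nat.find_min hQex hcr ⟨hc0, by rw [← hcc]; exact hc, hnd⟩
      have hda : m ∣ a i := hdiv a ha haa hai (by omega)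
      have hdb : m ∣ b i := hdiv b hb hbb hbi (by omega)
      apply hrd
      rw [← hsum]
      exact Nat.dvd_add hda hdb
  refine ⟨_, _, hg1, hg2, ?_, ?_, ?_, ?_, ?_⟩
  · intro hc
    have hmr : m = r := by
      have := congrFun hc i
      simpa using this
    exact hrd (hmr ▸ dvd_refl m)
  · intro j hj; simp [Pi.single_apply, hj]
  · intro j hj; simp [Pi.single_apply, hj]
  · simp; omega
  · simp; omega


/-- If `e_i ∈ S` and there is a hole supported on `A ∋ i`, there is a minimal generator
supported on `A`, with positive `i`-th coordinate, distinct from `e_i`. -/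
lemma wgen (h0 : 0 ∈ S) (hadd : ∀ a ∈ S, ∀ b ∈ S, a + b ∈ S) (hfin : Sᶜ.Finite)
    (A : Finset (Fin d)) (i : Fin d) (hi : i ∈ A)
    (h : Fin d → ℕ) (hh : h ∉ S) (hhsupp : ∀ j, j ∉ A → h j = 0) :
    ∃ w ∈ gensSet S, (∀ j, j ∉ A → w j = 0) ∧ 1 ≤ w i ∧ w ≠ Pi.single i 1 := by
  classical
  obtain ⟨N, hN0, hN⟩ := exists_bound hfin
  -- there exists an element of V
  have hVex : ∃ n, ∃ x : Fin d → ℕ, x ∈ S ∧ (∀ j, j ∉ A → x j = 0) ∧ 1 ≤ x i ∧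
      x - Pi.single i 1 ∉ S ∧ ∑ j, x j = n := by
    have hPex : ∃ k, h + Pi.single i k ∈ S := by
      refine ⟨N, ?_⟩
      by_contra hc
      have := hN _ hc i
      simp only [Pi.add_apply, Pi.single_eq_same] at this
      omega
    set k := Nat.find hPex with hk
    have hkS : h + Pi.single i k ∈ S := Nat.find_spec hPex
    have hk0 : 0 < k := by
      rcases Nat.eq_zero_or_pos k with hc | hc
      · exfalso
        apply hh
        have : h + Pi.single i k = h := by
          rw [hc]
          funext j
          simp
        rwa [this] at hkS
      · exact hc
    refine ⟨_, h + Pi.single i k, hkS, ?_, ?_, ?_, rfl⟩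
    · intro j hj
      have hji : j ≠ i := fun hc => hj (hc ▸ hi)
      simp [Pi.single_apply, hji, hhsupp j hj]
    · simp
      omega
    · have heq : h + Pi.single i k - Pi.single i 1 = h + Pi.single i (k - 1) := by
        funext j
        simp only [Pi.sub_apply, Pi.add_apply, Pi.single_apply]
        by_cases hji : j = i <;> simp [hji] <;> omega
      rw [heq]
      exact Nat.find_min hPex (by omega)
  set n₀ := Nat.find hVex with hn₀
  obtain ⟨w, hwS, hwsupp, hwi, hwm, hwsum⟩ := Nat.find_spec hVex
  have hw0 : w ≠ 0 := by
    intro hc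
    rw [hc] at hwi
    simp at hwi
  refine ⟨w, ?_, hwsupp, hwi, ?_⟩
  · apply mem_gens hwS hw0
    intro a ha ha0 b hb hb0 hab
    -- key symmetric claim
    have key : ∀ a b : Fin d → ℕ, a ∈ S → b ∈ S → b ≠ 0 → w = a + b → 1 ≤ a i → False := by
      intro a b ha hb hb0 hab hai
      have hamem : a - Pi.single i 1 ∉ S := by
        intro hc
        apply hwm
        have heq : (a - Pi.single i 1) + b = w - Pi.single i 1 := by
          funext j
          have := congrFun hab j
          simp only [Pi.add_apply] at this
          simp only [Pi.add_apply, Pi.sub_apply]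
          by_cases hji : j = i
          · subst hji
            simp only [Pi.single_eq_same]
            omega
          · simp only [Pi.single_apply, if_neg hji]
            omega
        rw [← heq]
        exact hadd _ hc _ hb
      have hasupp : ∀ j, j ∉ A → a j = 0 := by
        intro j hj
        have := congrFun hab j
        simp only [Pi.add_apply] at this
        have := hwsupp j hj
        omega
      have hsumlt : ∑ j, a j < n₀ := by
        have hsplit : ∑ j, w j = ∑ j, a j + ∑ j, b j := by
          rw [← Finset.sum_add_distrib]
          apply Finset.sum_congr rfl
          intro j _
          exact congrFun hab j
        have := sum_pos_of_ne_zero hb0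
        omega
      exact Nat.find_min hVex hsumlt ⟨a, ha, hasupp, hai, hamem, rfl⟩
    have hsum : a i + b i = w i := by
      have := congrFun hab i
      simp only [Pi.add_apply] at this
      omega
    rcases Nat.lt_or_ge (a i) 1 with hc | hc
    · exact key b a hb ha ha0 (by rw [hab, add_comm]) (by omega)
    · exact key a b ha hb hb0 hab hc
  · intro hc
    apply hwm
    rw [hc]
    have : (Pi.single i 1 : Fin d → ℕ) - Pi.single i 1 = 0 := by
      funext j
      simp
    rw [this]
    exact h0


/-- Two distinct generators supported on `A` with positive `i`-coordinate. -/
lemma twoPosGens (h0 : 0 ∈ S) (hadd : ∀ a ∈ S, ∀ b ∈ S, a + b ∈ S) (hfin : Sᶜ.Finite)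
    (A : Finset (Fin d)) (i : Fin d) (hi : i ∈ A)
    (h : Fin d → ℕ) (hh : h ∉ S) (hhsupp : ∀ j, j ∉ A → h j = 0) :
    ∃ g₁ g₂ : Fin d → ℕ, g₁ ∈ gensSet S ∧ g₂ ∈ gensSet S ∧ g₁ ≠ g₂ ∧
      (∀ j, j ∉ A → g₁ j = 0) ∧ (∀ j, j ∉ A → g₂ j = 0) ∧ 1 ≤ g₁ i ∧ 1 ≤ g₂ i := by
  classical
  by_cases hei : Pi.single i 1 ∈ S
  · obtain ⟨w, hwgen, hwsupp, hwi, hwne⟩ := wgen h0 hadd hfin A i hi h hh hhsupp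
    have hg1 : Pi.single i 1 ∈ gensSet S := by
      apply mem_gens hei
      · intro hc
        have := congrFun hc i
        simp at this
      · intro a ha ha0 b hb hb0 hab
        have h1 := sum_pos_of_ne_zero ha0
        have h2 := sum_pos_of_ne_zero hb0
        have h3 : ∑ j, (Pi.single i 1 : Fin d → ℕ) j = 1 := by
          rw [Finset.sum_pi_single']
          simp
        have h4 : ∑ j, (a + b) j = ∑ j, a j + ∑ j, b j := by
          rw [← Finset.sum_add_distrib]; rfl
        rw [hab] at h3
        omega
    refine ⟨Pi.single i 1, w, hg1, hwgen, fun hc => hwne hc.symm, ?_, hwsupp, by simp, hwi⟩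
    intro j hj
    have hji : j ≠ i := fun hc => hj (hc ▸ hi)
    simp [Pi.single_apply, hji]
  · obtain ⟨g₁, g₂, hg1, hg2, hne, hs1, hs2, hi1, hi2⟩ := axis_two h0 hfin i hei
    exact ⟨g₁, g₂, hg1, hg2, hne,
      fun j hj => hs1 j (fun hc => hj (hc ▸ hi)),
      fun j hj => hs2 j (fun hc => hj (hc ▸ hi)), hi1, hi2⟩

/-- Main counting: `2·|A|` generators supported on `A`, when a hole is supported on `A`. -/
lemma gens_count (h0 : 0 ∈ S) (hadd : ∀ a ∈ S, ∀ b ∈ S, a + b ∈ S) (hfin : Sᶜ.Finite) :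
    ∀ n (A : Finset (Fin d)), A.card = n →
    (∃ h, h ∉ S ∧ ∀ j, j ∉ A → h j = 0) →
    ∃ G : Finset (Fin d → ℕ), (↑G : Set (Fin d → ℕ)) ⊆ gensSet S ∧
      (∀ g ∈ G, ∀ j, j ∉ A → g j = 0) ∧ 2 * A.card ≤ G.card := by
  classical
  intro n
  induction n with
  | zero =>
    intro A hcard _
    exact ⟨∅, by simp, by simp, by simp [hcard]⟩
  | succ n ih =>
    intro A hcard hhole
    obtain ⟨h, hh, hhsupp⟩ := hhole
    have hex : ∃ i ∈ A, Pi.single i 1 ∉ S := by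
      by_contra hc
      push_neg at hc
      exact hh (descent h0 hadd A hc _ h rfl hhsupp)
    obtain ⟨i₀, hi₀A, hi₀⟩ := hex
    by_cases hj : ∃ j ∈ A, j ≠ i₀
    · obtain ⟨j, hjA, hjne⟩ := hj
      set A' := A.erase j with hA'
      have hcard' : A'.card = n := by
        rw [hA', Finset.card_erase_of_mem hjA, hcard]
        rfl
      have hhole' : ∃ h', h' ∉ S ∧ ∀ j', j' ∉ A' → h' j' = 0 := by
        refine ⟨Pi.single i₀ 1, hi₀, ?_⟩
        intro j' hj'
        have : j' ≠ i₀ := by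
          intro hc
          subst hc
          exact hj' (Finset.mem_erase.mpr ⟨fun hc2 => hjne hc2.symm, hi₀A⟩)
        simp [Pi.single_apply, this]
      obtain ⟨G', hG'sub, hG'supp, hG'card⟩ := ih A' hcard' hhole'
      obtain ⟨g₁, g₂, hg1, hg2, hne, hs1, hs2, hp1, hp2⟩ :=
        twoPosGens h0 hadd hfin A j hjA h hh hhsupp
      have hjA' : j ∉ A' := fun hc => (Finset.mem_erase.mp hc).1 rfl
      have hg1G' : g₁ ∉ G' := by
        intro hc
        have := hG'supp g₁ hc j hjA'
        omega
      have hg2G' : g₂ ∉ G' := by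
        intro hc
        have := hG'supp g₂ hc j hjA'
        omega
      refine ⟨insert g₁ (insert g₂ G'), ?_, ?_, ?_⟩
      · intro x hx
        simp only [Finset.coe_insert, Set.mem_insert_iff, Finset.mem_coe] at hx
        rcases hx with rfl | rfl | hx
        · exact hg1
        · exact hg2
        · exact hG'sub hx
      · intro g hg j' hj'
        simp only [Finset.mem_insert] at hg
        have hj'A : j' ∉ A' := fun hc => hj' (Finset.mem_of_mem_erase hc)
        rcases hg with rfl | rfl | hg
        · exact hs1 j' hj'
        · exact hs2 j' hj'
        · exact hG'supp g hg j' hj'A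
      · rw [Finset.card_insert_of_notMem (by simp [hne, hg1G']),
          Finset.card_insert_of_notMem hg2G']
        omega
    · push_neg at hj
      have hA : A = {i₀} := by
        apply Finset.eq_singleton_iff_unique_mem.mpr
        exact ⟨hi₀A, fun x hx => hj x hx⟩
      obtain ⟨g₁, g₂, hg1, hg2, hne, hs1, hs2, hp1, hp2⟩ :=
        twoPosGens h0 hadd hfin A i₀ hi₀A h hh hhsupp
      refine ⟨{g₁, g₂}, ?_, ?_, ?_⟩
      · intro x hx
        simp only [Finset.coe_insert, Set.mem_insert_iff, Finset.coe_singleton,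
          Set.mem_singleton_iff] at hx
        rcases hx with rfl | rfl
        · exact hg1
        · exact hg2
      · intro g hg j' hj'
        simp only [Finset.mem_insert, Finset.mem_singleton] at hg
        rcases hg with rfl | rfl
        · exact hs1 j' hj'
        · exact hs2 j' hj'
      · rw [Finset.card_pair hne]
        have : A.card = 1 := by rw [hA]; simp
        omega

/-- The set of minimal generators is finite. -/
lemma gens_finite (hfin : Sᶜ.Finite) : (gensSet S).Finite := by
  classical
  obtain ⟨N, hN0, hN⟩ := exists_bound hfin
  apply Set.Finite.subset
    (Set.finite_Iic (fun _ => 2 * N : Fin d → ℕ))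
  intro x hx
  obtain ⟨⟨hxS, hx0⟩, hxnd⟩ := hx
  rw [Set.mem_Iic, Pi.le_def]
  intro i
  show x i ≤ 2 * N
  by_contra hc
  push_neg at hc
  apply hxnd
  simp only [Set.mem_setOf_eq]
  refine ⟨Pi.single i N, ⟨?_, ?_⟩, x - Pi.single i N, ⟨?_, ?_⟩, ?_⟩
  · by_contra hcc
    have := hN _ hcc i
    simp at this
  · simp only [Set.mem_singleton_iff]
    intro hz
    have := congrFun hz i
    simp at this
    omega
  · by_contra hcc
    have := hN _ hcc i
    simp only [Pi.sub_apply, Pi.single_eq_same] at this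
    omega
  · simp only [Set.mem_singleton_iff]
    intro hz
    have := congrFun hz i
    simp only [Pi.sub_apply, Pi.single_eq_same, Pi.zero_apply] at this
    omega
  · funext j
    simp only [Pi.add_apply, Pi.sub_apply]
    by_cases hji : j = i
    · subst hji
      simp only [Pi.single_eq_same]
      omega
    · simp only [Pi.single_apply, if_neg hji]
      omega

lemma cset_fin (hfin : Sᶜ.Finite) : (S ∩ CSet S).Finite := by
  apply Set.Finite.subset (s := CSet S) ?_ Set.inter_subset_right
  have hsub : CSet S ⊆ ⋃ h ∈ Sᶜ, Set.Iic h := by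
    rintro x ⟨h, hh, hx⟩
    exact Set.mem_biUnion hh hx
  exact (Set.Finite.biUnion hfin fun h _ => Set.finite_Iic h).subset hsub


lemma partA (hadd : ∀ a ∈ S, ∀ b ∈ S, a + b ∈ S) (hfin : Sᶜ.Finite)
    (f : Fin d → ℕ) (hf : f ∈ Sᶜ) (hsym : ∀ h ∈ Sᶜ, f - h ∈ S) :
    ∏ i, (f i + 1) ≤ 2 * nNum S := by
  classical
  set B : Finset (Fin d → ℕ) := Fintype.piFinset (fun i => Finset.range (f i + 1)) with hBdef
  have hmemB : ∀ x : Fin d → ℕ, x ∈ B ↔ ∀ i, x i ≤ f i := by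
    intro x
    simp [hBdef, Fintype.mem_piFinset, Nat.lt_succ_iff]
  have hcardB : B.card = ∏ i, (f i + 1) := by
    simp [hBdef, Fintype.card_piFinset]
  set BS := B.filter (fun x => x ∈ S) with hBS
  set BC := B.filter (fun x => x ∉ S) with hBC
  have hsplit : BS.card + BC.card = B.card := Finset.card_filter_add_card_filter_not _
  -- map from BC to BS
  have h1 : BC.card ≤ BS.card := by
    apply Finset.card_le_card_of_injOn (fun x => f - x)
    · intro x hx
      simp only [Finset.mem_coe, hBC, Finset.mem_filter] at hx
      obtain ⟨hxB, hxS⟩ := hx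
      simp only [Finset.mem_coe, hBS, Finset.mem_filter]
      constructor
      · rw [hmemB]
        intro i
        simp only [Pi.sub_apply]
        omega
      · exact hsym x hxS
    · intro x hx y hy hxy
      simp only [Finset.mem_coe, hBC, Finset.mem_filter] at hx hy
      have hx' := (hmemB x).mp hx.1
      have hy' := (hmemB y).mp hy.1
      funext i
      have := congrFun hxy i
      simp only [Pi.sub_apply] at this
      have := hx' i; have := hy' i
      omega
  have h2 : BS.card ≤ BC.card := by
    apply Finset.card_le_card_of_injOn (fun x => f - x)
    · intro x hx
      simp only [Finset.mem_coe, hBS, Finset.mem_filter] at hx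
      obtain ⟨hxB, hxS⟩ := hx
      have hxle := (hmemB x).mp hxB
      simp only [Finset.mem_coe, hBC, Finset.mem_filter]
      constructor
      · rw [hmemB]
        intro i
        simp only [Pi.sub_apply]
        omega
      · intro hfs
        apply hf
        have : x + (f - x) = f := by
          funext i
          simp only [Pi.add_apply, Pi.sub_apply]
          have := hxle i
          omega
        rw [← this]
        exact hadd x hxS _ hfs
    · intro x hx y hy hxy
      simp only [Finset.mem_coe, hBS, Finset.mem_filter] at hx hy
      have hx' := (hmemB x).mp hx.1
      have hy' := (hmemB y).mp hy.1
      funext i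
      have := congrFun hxy i
      simp only [Pi.sub_apply] at this
      have := hx' i; have := hy' i
      omega
  have heq : BS.card = BC.card := le_antisymm h2 h1
  have hle : BS.card ≤ nNum S := by
    have hsub : (BS : Set (Fin d → ℕ)) ⊆ S ∩ CSet S := by
      intro x hx
      simp only [hBS, Finset.coe_filter, Set.mem_setOf_eq] at hx
      exact ⟨hx.2, f, hf, fun i => (hmemB x).mp hx.1 i⟩
    have := Set.ncard_le_ncard hsub (cset_fin hfin)
    rwa [Set.ncard_coe_finset] at this
  omega

end Aux

/-- a symmetric GNS with Frobenius element `f` satisfies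
`e(S)·n(S) ≥ d·(f⁽¹⁾+1)⋯(f⁽ᵈ⁾+1)`. -/
theorem stmt1 {d : ℕ} (S : Set (Fin d → ℕ))
    (h0 : 0 ∈ S) (hadd : ∀ a ∈ S, ∀ b ∈ S, a + b ∈ S) (hfin : Sᶜ.Finite)
    (f : Fin d → ℕ) (hf : f ∈ Sᶜ) (hsym : ∀ h ∈ Sᶜ, f - h ∈ S) :
    eNum S * nNum S ≥ d * ∏ i, (f i + 1) := by
  have hA : ∏ i, (f i + 1) ≤ 2 * nNum S := partA hadd hfin f hf hsym
  have hE : 2 * d ≤ eNum S := by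
    obtain ⟨G, hGsub, _, hGcard⟩ := gens_count h0 hadd hfin d Finset.univ (by simp)
      ⟨f, hf, fun j hj => absurd (Finset.mem_univ j) hj⟩
    have hle := Set.ncard_le_ncard hGsub (gens_finite hfin)
    rw [Set.ncard_coe_finset] at hle
    have hcardA : (Finset.univ : Finset (Fin d)).card = d := by simp
    unfold eNum
    omega
  calc d * ∏ i, (f i + 1) ≤ d * (2 * nNum S) := Nat.mul_le_mul (le_refl d) hA
    _ = (2 * d) * nNum S := by ring
    _ ≤ eNum S * nNum S := Nat.mul_le_mul hE (le_refl _)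
end

section
/- For a GNS S ⊆ ℕ^d, the set M(S) = {0} ∪ {h ∈ H(S) : the only element of S below h in the componentwise order is 0} is the minimal subset T of ℕ^d with the property that every x ∈ ℕ^d can be written as x = t + s with t ∈ T and s ∈ S. -/
/-!
Given `x`, pick `s ∈ S` maximal among the elements of `S` below `x` (there are finitely many,
and `0` is one of them). Then `t = x - s` has no nonzero element `s'` of `S` below it, since
`s + s'` would be a larger element of `S` below `x`; so `x = t + s` with `t ∈ M(S)`.
Conversely, if `h ∈ M(S)` is written as `t + s`, then `s ≤ h` forces `s = 0`, so `h = t ∈ T`.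
-/

/-- `M(S) = {0} ∪ M(S)*` where `M(S)*` is the set of fundamental holes:
holes `h` such that the only element of `S` below `h` is `0`. -/
def MSet {d : ℕ} (S : Set (Fin d → ℕ)) : Set (Fin d → ℕ) :=
  {0} ∪ {h | h ∈ Sᶜ ∧ ∀ s ∈ S, s ≤ h → s = 0}

section Decomposition

variable {M : Type*} [AddCommMonoid M] [PartialOrder M] [CanonicallyOrderedAdd M] [Sub M]
  [OrderedSub M] [IsLeftCancelAdd M] [LocallyFiniteOrderBot M]

theorem AddSubmonoid.exists_mem_le_forall_le_tsub_eq_zero (S : AddSubmonoid M) (x : M) :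
    ∃ s ∈ S, s ≤ x ∧ ∀ s' ∈ S, s' ≤ x - s → s' = 0 := by
  have hfin : {s | s ∈ S ∧ s ≤ x}.Finite := (Set.finite_Iic x).subset fun _ hs => hs.2
  obtain ⟨s, ⟨hsS, hsx⟩, hmax⟩ := hfin.exists_maximal ⟨0, S.zero_mem, zero_le⟩
  refine ⟨s, hsS, hsx, fun s' hs'S hs' => ?_⟩
  have hsum : s + s' ≤ s :=
    hmax ⟨S.add_mem hsS hs'S, add_le_of_le_tsub_left_of_le hsx hs'⟩ le_self_add
  exact add_eq_left.mp (le_antisymm hsum le_self_add)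

end Decomposition

theorem MSet_eq_setOf {d : ℕ} (S : Set (Fin d → ℕ)) :
    MSet S = {h | ∀ s ∈ S, s ≤ h → s = 0} := by
  ext h
  constructor
  · rintro (rfl | ⟨-, hmin⟩)
    · exact fun s _ hs => le_antisymm hs (zero_le)
    · exact hmin
  · intro hmin
    by_cases hh : h = 0
    · exact Or.inl hh
    · exact Or.inr ⟨fun hS => hh (hmin h hS le_rfl), hmin⟩

theorem stmt4_general {d : ℕ} (S : Set (Fin d → ℕ))
    (h0 : 0 ∈ S) (hadd : ∀ a ∈ S, ∀ b ∈ S, a + b ∈ S) :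
    (∀ x : Fin d → ℕ, ∃ t ∈ MSet S, ∃ s ∈ S, x = t + s) ∧
    (∀ T : Set (Fin d → ℕ), (∀ x : Fin d → ℕ, ∃ t ∈ T, ∃ s ∈ S, x = t + s) →
      MSet S ⊆ T) := by
  let S' : AddSubmonoid (Fin d → ℕ) :=
    { carrier := S, add_mem' := fun ha hb => hadd _ ha _ hb, zero_mem' := h0 }
  rw [MSet_eq_setOf]
  refine ⟨fun x => ?_, fun T hT h hmin => ?_⟩
  · obtain ⟨s, hsS, hsx, hsmax⟩ := S'.exists_mem_le_forall_le_tsub_eq_zero x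
    exact ⟨x - s, hsmax, s, hsS, (tsub_add_cancel_of_le hsx).symm⟩
  · obtain ⟨t, htT, s, hsS, rfl⟩ := hT h
    rwa [hmin s hsS le_add_self, add_zero]

/-- `M(S)` is the minimal subset `T ⊆ ℕ^d` such that every
`x ∈ ℕ^d` decomposes as `x = t + s` with `t ∈ T`, `s ∈ S`. -/
theorem stmt4 {d : ℕ} (S : Set (Fin d → ℕ))
    (h0 : 0 ∈ S) (hadd : ∀ a ∈ S, ∀ b ∈ S, a + b ∈ S) (hfin : Sᶜ.Finite) :
    (∀ x : Fin d → ℕ, ∃ t ∈ MSet S, ∃ s ∈ S, x = t + s) ∧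
    (∀ T : Set (Fin d → ℕ), (∀ x : Fin d → ℕ, ∃ t ∈ T, ∃ s ∈ S, x = t + s) →
      MSet S ⊆ T) :=
  stmt4_general S h0 hadd
end

section
/- For any GNS S ⊆ ℕ^d, c(S) ≤ m(S)·n(S). -/
/-- `c(S) = |C(S)|`. -/
noncomputable def cNum {d : ℕ} (S : Set (Fin d → ℕ)) : ℕ := (CSet S).ncard

/-- the multiplicity `m(S) = |M(S)|`. -/
noncomputable def mNum {d : ℕ} (S : Set (Fin d → ℕ)) : ℕ := (MSet S).ncard

lemma ncard_prod' {α β : Type*} (s : Set α) (t : Set β) :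
    (s ×ˢ t).ncard = s.ncard * t.ncard := by
  rw [← Nat.card_coe_set_eq, ← Nat.card_coe_set_eq, ← Nat.card_coe_set_eq,
    Nat.card_congr (Equiv.Set.prod s t), Nat.card_prod]

lemma key_decomp {d : ℕ} (S : Set (Fin d → ℕ))
    (h0 : 0 ∈ S) (hadd : ∀ a ∈ S, ∀ b ∈ S, a + b ∈ S) :
    ∀ x ∈ CSet S, ∃ p : (Fin d → ℕ) × (Fin d → ℕ),
      p.1 ∈ MSet S ∧ p.2 ∈ S ∩ CSet S ∧ x = p.1 + p.2 := by
  intro x hx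
  obtain ⟨h, hh, hxh⟩ := hx
  -- the set of elements of S below x
  set T : Set (Fin d → ℕ) := {s | s ∈ S ∧ s ≤ x} with hT
  have hTfin : T.Finite := (Set.finite_Iic x).subset (fun s hs => hs.2)
  have hTne : T.Nonempty := ⟨0, h0, fun i => Nat.zero_le _⟩
  obtain ⟨s, hsT, hsmax⟩ := Set.Finite.exists_maximalFor (fun s => ∑ i, s i) T hTfin hTne
  set m : Fin d → ℕ := fun i => x i - s i with hm
  have hxm : x = m + s := by
    funext i
    have h1 : s i ≤ x i := hsT.2 i
    show x i = m i + s i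
    simp only [hm]
    omega
  -- the key claim
  have hclaim : ∀ t ∈ S, t ≤ m → t = 0 := by
    intro t htS htm
    by_contra htne
    have hst : s + t ∈ T := by
      refine ⟨hadd s hsT.1 t htS, fun i => ?_⟩
      have h1 : t i ≤ m i := htm i
      have h2 : s i ≤ x i := hsT.2 i
      simp only [hm] at h1
      show s i + t i ≤ x i
      omega
    have hmax : ∑ i, (s + t) i ≤ ∑ i, s i := hsmax hst (Finset.sum_le_sum (fun i _ => by simp))
    have : ∑ i, t i = 0 := by
      have : ∑ i, (s + t) i = ∑ i, s i + ∑ i, t i := by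
        simp [Finset.sum_add_distrib]
      omega
    apply htne
    funext i
    have := Finset.sum_eq_zero_iff.mp this i (Finset.mem_univ i)
    simpa using this
  refine ⟨⟨m, s⟩, ?_, ⟨hsT.1, h, hh, le_trans hsT.2 hxh⟩, hxm⟩
  by_cases hm0 : m = 0
  · exact Or.inl hm0
  · refine Or.inr ⟨?_, hclaim⟩
    intro hmS
    exact hm0 (hclaim m hmS le_rfl)

/-- for any GNS `S ⊆ ℕ^d`, `c(S) ≤ m(S)·n(S)`. -/
theorem stmt5 {d : ℕ} (S : Set (Fin d → ℕ))
    (h0 : 0 ∈ S) (hadd : ∀ a ∈ S, ∀ b ∈ S, a + b ∈ S) (hfin : Sᶜ.Finite) :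
    cNum S ≤ mNum S * nNum S := by
  classical
  have hCfin : (CSet S).Finite := by
    have : CSet S ⊆ ⋃ h ∈ Sᶜ, Set.Iic h := by
      rintro x ⟨h, hh, hx⟩
      exact Set.mem_biUnion hh hx
    exact (hfin.biUnion (fun h _ => Set.finite_Iic h)).subset this
  have hMfin : (MSet S).Finite := by
    apply (Set.Finite.union (Set.finite_singleton 0) hfin).subset
    rintro x (hx | hx)
    · exact Or.inl hx
    · exact Or.inr hx.1
  have hNfin : (S ∩ CSet S).Finite := hCfin.inter_of_right _
  -- define decomposition map
  have key := key_decomp S h0 hadd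
  set f : (Fin d → ℕ) → (Fin d → ℕ) × (Fin d → ℕ) :=
    fun x => if hx : x ∈ CSet S then Classical.choose (key x hx) else (0, 0) with hf
  have hfspec : ∀ x (hx : x ∈ CSet S), (f x).1 ∈ MSet S ∧ (f x).2 ∈ S ∩ CSet S ∧
      x = (f x).1 + (f x).2 := by
    intro x hx
    simp only [hf, dif_pos hx]
    exact Classical.choose_spec (key x hx)
  have hle : cNum S ≤ (MSet S ×ˢ (S ∩ CSet S)).ncard := by
    refine Set.ncard_le_ncard_of_injOn f ?_ ?_ (hMfin.prod hNfin)
    · intro x hx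
      obtain ⟨h1, h2, _⟩ := hfspec x hx
      exact Set.mem_prod.mpr ⟨h1, h2⟩
    · intro x hx y hy hxy
      obtain ⟨_, _, hx3⟩ := hfspec x hx
      obtain ⟨_, _, hy3⟩ := hfspec y hy
      rw [hx3, hy3, hxy]
  calc cNum S ≤ (MSet S ×ˢ (S ∩ CSet S)).ncard := hle
    _ = mNum S * nNum S := ncard_prod' _ _
end

section
/- Let S ⊆ ℕ^d be a GNS with minimal generating set G(S), fundamental holes M(S)*, embedded in ℕ^{d+1} avoiding coordinate i, and let T^k(S,i) = S ∪ (e_i + S) ∪ ... ∪ (k·e_i + S) ∪ ((k+1)e_i + ℕ^{d+1}) be its k-thickening along axis i. Then the minimal generating set of T^k(S,i) is {e_i} ∪ G(S) ∪ ((k+1)e_i + M(S)*). -/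
/-- The fundamental holes `M(S)*` of `S`: holes below which the only element of `S` is `0`. -/
def MStar {d : ℕ} (S : Set (Fin d → ℕ)) : Set (Fin d → ℕ) :=
  {h | h ∈ Sᶜ ∧ ∀ s ∈ S, s ≤ h → s = 0}

/-- The embedding of `ℕ^d` into `ℕ^{d+1}` avoiding coordinate `i`. -/
def emb {d : ℕ} (i : Fin (d + 1)) (s : Fin d → ℕ) : Fin (d + 1) → ℕ :=
  i.insertNth 0 s

/-- The `k`-thickening of `S ⊆ ℕ^d` along axis `i` in `ℕ^{d+1}`:
`T^k(S,i) = S ∪ (e_i + S) ∪ ⋯ ∪ (k·e_i + S) ∪ ((k+1)·e_i + ℕ^{d+1})`. -/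
def thick {d : ℕ} (S : Set (Fin d → ℕ)) (k : ℕ) (i : Fin (d + 1)) :
    Set (Fin (d + 1) → ℕ) :=
  {x | ∃ j ≤ k, ∃ s ∈ S, x = j • Pi.single i 1 + emb i s} ∪
  {x | ∃ y : Fin (d + 1) → ℕ, x = (k + 1) • Pi.single i 1 + y}

section Irreducibles

variable {M N : Type*} [AddZeroClass M] [AddZeroClass N]

def irreducibles (T : Set M) : Set M :=
  (T \ {0}) \ {x | ∃ a ∈ T \ {0}, ∃ b ∈ T \ {0}, x = a + b}

theorem mem_irreducibles {T : Set M} {x : M} :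
    x ∈ irreducibles T ↔ x ∈ T ∧ x ≠ 0 ∧ ∀ a ∈ T, ∀ b ∈ T, x = a + b → a = 0 ∨ b = 0 := by
  simp only [irreducibles, Set.mem_sdiff, Set.mem_singleton_iff, Set.mem_ofPred_eq]
  grind

theorem AddEquiv.image_irreducibles (e : M ≃+ N) (T : Set M) :
    e '' irreducibles T = irreducibles (e '' T) := by
  ext y
  obtain ⟨x, rfl⟩ := e.surjective y
  simp [e.injective.mem_set_image, mem_irreducibles, ← map_add]

end Irreducibles

def fundamentalHoles {A : Type*} [Zero A] [LE A] (S : Set A) : Set A :=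
  {h | h ∉ S ∧ ∀ s ∈ S, s ≤ h → s = 0}

section Thickening

variable {A : Type*} {S : Set A} {k : ℕ}

def thickening (S : Set A) (k : ℕ) : Set (ℕ × A) :=
  {p | p.1 ≤ k ∧ p.2 ∈ S ∨ k < p.1}

theorem snd_mem_of_mem_thickening {p : ℕ × A} (hp : p ∈ thickening S k) (hk : p.1 ≤ k) :
    p.2 ∈ S :=
  (hp.resolve_right hk.not_gt).2

theorem mk_one_zero_mem_thickening [Zero A] (h0 : 0 ∈ S) : ((1, 0) : ℕ × A) ∈ thickening S k := by
  rcases k.eq_zero_or_pos with rfl | hk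
  · exact Or.inr zero_lt_one
  · exact Or.inl ⟨hk, h0⟩

theorem mk_zero_mem_irreducibles_thickening [AddZeroClass A] {g : A} (hg : g ∈ irreducibles S) :
    ((0, g) : ℕ × A) ∈ irreducibles (thickening S k) := by
  obtain ⟨hgS, hg0, hg_dec⟩ := mem_irreducibles.1 hg
  refine mem_irreducibles.2 ⟨Or.inl ⟨k.zero_le, hgS⟩, by simp [hg0], fun a ha b hb hab => ?_⟩
  obtain ⟨ha1, hb1⟩ := Nat.add_eq_zero_iff.1 (congrArg Prod.fst hab).symm
  rcases hg_dec a.2 (snd_mem_of_mem_thickening ha (by omega)) b.2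
      (snd_mem_of_mem_thickening hb (by omega)) (congrArg Prod.snd hab) with h | h
  · exact Or.inl (Prod.ext ha1 h)
  · exact Or.inr (Prod.ext hb1 h)

variable [AddCommMonoid A] [PartialOrder A] [CanonicallyOrderedAdd A]

theorem mk_one_zero_mem_irreducibles_thickening (h0 : 0 ∈ S) :
    ((1, 0) : ℕ × A) ∈ irreducibles (thickening S k) := by
  refine mem_irreducibles.2 ⟨mk_one_zero_mem_thickening h0, by simp, fun a _ b _ hab => ?_⟩
  have h2 : a.2 = 0 ∧ b.2 = 0 := add_eq_zero.1 (congrArg Prod.snd hab).symm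
  rcases Nat.add_eq_one_iff.1 (congrArg Prod.fst hab).symm with ⟨ha, -⟩ | ⟨-, hb⟩
  · exact Or.inl (Prod.ext ha h2.1)
  · exact Or.inr (Prod.ext hb h2.2)

theorem mk_succ_mem_irreducibles_thickening (h0 : 0 ∈ S) {m : A} (hm : m ∈ fundamentalHoles S) :
    ((k + 1, m) : ℕ × A) ∈ irreducibles (thickening S k) := by
  obtain ⟨hmS, hm_min⟩ := hm
  refine mem_irreducibles.2 ⟨Or.inr k.lt_succ_self, by simp, fun a ha b hb hab => ?_⟩
  have h1 : a.1 + b.1 = k + 1 := (congrArg Prod.fst hab).symm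
  have h2 : m = a.2 + b.2 := congrArg Prod.snd hab
  have ha_min (hak : a.1 ≤ k) : a.2 = 0 :=
    hm_min a.2 (snd_mem_of_mem_thickening ha hak) (h2 ▸ le_self_add)
  have hb_min (hbk : b.1 ≤ k) : b.2 = 0 :=
    hm_min b.2 (snd_mem_of_mem_thickening hb hbk) (h2 ▸ le_add_self)
  by_cases hak : a.1 ≤ k <;> by_cases hbk : b.1 ≤ k
  · exact absurd (by simpa [h2, ha_min hak, hb_min hbk] using h0) hmS
  · exact Or.inl (Prod.ext (by simp; omega) (ha_min hak))
  · exact Or.inr (Prod.ext (by simp; omega) (hb_min hbk))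
  · omega

theorem eq_or_mem_of_mem_irreducibles_thickening [Sub A] [OrderedSub A] (h0 : 0 ∈ S) {p : ℕ × A}
    (hp : p ∈ irreducibles (thickening S k)) :
    p = (1, 0) ∨ (p.1 = 0 ∧ p.2 ∈ irreducibles S) ∨ (p.1 = k + 1 ∧ p.2 ∈ fundamentalHoles S) := by
  obtain ⟨j, m⟩ := p
  obtain ⟨hpT, hp0, hp_dec⟩ := mem_irreducibles.1 hp
  rcases j.eq_zero_or_pos with rfl | hj
  · refine Or.inr (Or.inl ⟨rfl, mem_irreducibles.2 ⟨snd_mem_of_mem_thickening hpT k.zero_le,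
      fun hm => hp0 (Prod.ext rfl hm), fun a ha b hb hab => ?_⟩⟩)
    rcases hp_dec (0, a) (Or.inl ⟨k.zero_le, ha⟩) (0, b) (Or.inl ⟨k.zero_le, hb⟩)
      (Prod.ext rfl hab) with h | h
    · exact Or.inl (congrArg Prod.snd h)
    · exact Or.inr (congrArg Prod.snd h)
  by_cases hpred : (j - 1, m) ∈ thickening S k
  · rcases hp_dec (1, 0) (mk_one_zero_mem_thickening h0) (j - 1, m) hpred
      (Prod.ext (by simp; omega) (zero_add m).symm) with h | h
    · simp at h
    · simp only [Prod.mk_eq_zero] at h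
      exact Or.inl (Prod.ext (by simp; omega) h.2)
  · simp only [thickening, Set.mem_ofPred_eq, not_or, not_and] at hpT hpred
    have hmS : m ∉ S := hpred.1 (by omega)
    have hjk : j = k + 1 := by
      rcases hpT with ⟨-, h⟩ | h
      · exact absurd h hmS
      · omega
    refine Or.inr (Or.inr ⟨hjk, hmS, fun s hs hsm => ?_⟩)
    rcases hp_dec (0, s) (Or.inl ⟨k.zero_le, hs⟩) (k + 1, m - s) (Or.inr k.lt_succ_self)
      (Prod.ext (by simp [hjk]) (add_tsub_cancel_of_le hsm).symm) with h | h
    · exact congrArg Prod.snd h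
    · simp at h

theorem irreducibles_thickening [Sub A] [OrderedSub A] (h0 : 0 ∈ S) :
    irreducibles (thickening S k) =
      {(1, 0)} ∪ Prod.mk 0 '' irreducibles S ∪ Prod.mk (k + 1) '' fundamentalHoles S := by
  ext p
  constructor
  · intro hp
    rcases eq_or_mem_of_mem_irreducibles_thickening h0 hp with rfl | ⟨h1, h2⟩ | ⟨h1, h2⟩
    · exact Or.inl (Or.inl rfl)
    · exact Or.inl (Or.inr ⟨p.2, h2, Prod.ext h1.symm rfl⟩)
    · exact Or.inr ⟨p.2, h2, Prod.ext h1.symm rfl⟩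
  · rintro ((rfl | ⟨g, hg, rfl⟩) | ⟨m, hm, rfl⟩)
    · exact mk_one_zero_mem_irreducibles_thickening h0
    · exact mk_zero_mem_irreducibles_thickening hg
    · exact mk_succ_mem_irreducibles_thickening h0 hm

end Thickening

def insertNthAddEquiv {M : Type*} [AddZeroClass M] {d : ℕ} (i : Fin (d + 1)) :
    M × (Fin d → M) ≃+ (Fin (d + 1) → M) :=
  { Fin.insertNthEquiv (fun _ => M) i with
    map_add' := fun p q => Fin.insertNth_add (α := fun _ => M) i p.1 q.1 p.2 q.2 }

theorem insertNthAddEquiv_apply {d : ℕ} (i : Fin (d + 1)) (j : ℕ) (s : Fin d → ℕ) :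
    insertNthAddEquiv i (j, s) = j • Pi.single i 1 + emb i s := by
  change Fin.insertNth (α := fun _ => ℕ) i j s = _
  rw [← Pi.single_smul', smul_eq_mul, mul_one, emb, ← Fin.insertNth_zero_right,
    ← Fin.insertNth_add]
  simp

theorem emb_zero {d : ℕ} (i : Fin (d + 1)) : emb i (0 : Fin d → ℕ) = 0 :=
  (Fin.insertNth_zero_right i 0).trans (Pi.single_zero i)

theorem gensSet_eq_irreducibles {d : ℕ} (S : Set (Fin d → ℕ)) : gensSet S = irreducibles S := rfl

theorem MStar_eq_fundamentalHoles {d : ℕ} (S : Set (Fin d → ℕ)) :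
    MStar S = fundamentalHoles S :=
  rfl

theorem thick_eq_image_thickening {d : ℕ} (S : Set (Fin d → ℕ)) (k : ℕ) (i : Fin (d + 1)) :
    thick S k i = insertNthAddEquiv i '' thickening S k := by
  set e := insertNthAddEquiv (M := ℕ) i
  ext x
  obtain ⟨⟨j, m⟩, rfl⟩ := e.surjective x
  have hsingle : (k + 1) • Pi.single i 1 = e (k + 1, 0) := by
    simp [e, insertNthAddEquiv_apply, emb_zero]
  simp only [thick, Set.mem_union, Set.mem_ofPred_eq, e, ← insertNthAddEquiv_apply, hsingle,
    e.surjective.exists, ← map_add, e.injective.eq_iff, e.injective.mem_set_image, thickening]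
  rw [← le_iff_exists_add, Prod.mk_le_mk]
  simp

theorem stmt6_general {d : ℕ} (S : Set (Fin d → ℕ))
    (h0 : 0 ∈ S)
    (k : ℕ) (i : Fin (d + 1)) :
    gensSet (thick S k i) =
      {Pi.single i 1} ∪ (emb i '' gensSet S) ∪
        ((fun m => (k + 1) • Pi.single i 1 + emb i m) '' MStar S) := by
  rw [gensSet_eq_irreducibles, gensSet_eq_irreducibles, MStar_eq_fundamentalHoles,
    thick_eq_image_thickening, ← AddEquiv.image_irreducibles, irreducibles_thickening h0,
    Set.image_union, Set.image_union, Set.image_singleton, Set.image_image, Set.image_image]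
  simp [insertNthAddEquiv_apply, emb_zero]

/-- the minimal generating set of the `k`-thickening `T^k(S,i)` is
`{e_i} ∪ G(S) ∪ ((k+1)·e_i + M(S)*)`. -/
theorem stmt6 {d : ℕ} (S : Set (Fin d → ℕ))
    (h0 : 0 ∈ S) (hadd : ∀ a ∈ S, ∀ b ∈ S, a + b ∈ S) (hfin : Sᶜ.Finite)
    (k : ℕ) (i : Fin (d + 1)) :
    gensSet (thick S k i) =
      {Pi.single i 1} ∪ (emb i '' gensSet S) ∪
        ((fun m => (k + 1) • Pi.single i 1 + emb i m) '' MStar S) :=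
  stmt6_general S h0 k i
end

section
/- Let S ⊆ ℕ^d be a GNS whose holes span ℝ^d (i.e., Span_ℝ(H(S)) has dimension d). If S is pseudo-symmetric, then the genus g(S) = |H(S)| satisfies g(S) ≥ d+1. In particular, a GNS with g(S) = d whose holes span ℝ^d is not pseudo-symmetric. -/
/-- if the holes of a GNS `S ⊆ ℕ^d` span `ℝ^d` and `S` is
pseudo-symmetric (there is `f ∈ H(S)` with all components even such that
`f - h ∈ S` for all holes `h ≠ f/2`), then the genus `g(S) = |H(S)|` satisfies
`g(S) ≥ d + 1`. -/
theorem stmt9 {d : ℕ} (S : Set (Fin d → ℕ))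
    (h0 : 0 ∈ S) (hadd : ∀ a ∈ S, ∀ b ∈ S, a + b ∈ S) (hfin : Sᶜ.Finite)
    (hspan : Submodule.span ℝ ((fun h : Fin d → ℕ => fun i => (h i : ℝ)) '' Sᶜ) = ⊤)
    (f : Fin d → ℕ) (hf : f ∈ Sᶜ) (heven : ∀ i, Even (f i))
    (hps : ∀ h ∈ Sᶜ, h ≠ (fun i => f i / 2) → f - h ∈ S) :
    Sᶜ.ncard ≥ d + 1 := by
  classical
  set e : (Fin d → ℕ) → (Fin d → ℝ) := fun h i => (h i : ℝ) with he
  set g : Fin d → ℕ := fun i => f i / 2 with hgdef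
  have hgg : g + g = f := by
    funext i
    obtain ⟨c, hc⟩ := heven i
    simp only [hgdef, Pi.add_apply]
    omega
  have hg : g ∈ Sᶜ := by
    intro hmem
    exact hf (by simpa [hgg] using hadd g hmem g hmem)
  have hfg : f ≠ g := by
    intro h
    apply hf
    have : f = 0 := by
      funext i
      have : f i = f i / 2 := congrFun h i
      obtain ⟨c, hc⟩ := heven i
      simp only [Pi.zero_apply]
      omega
    rwa [this]
  set T : Set (Fin d → ℝ) := e '' Sᶜ with hT
  have hcf : e f ∈ T := ⟨f, hf, rfl⟩
  have hcg : e g ∈ T := ⟨g, hg, rfl⟩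
  have hcfg : e f ≠ e g := by
    intro h
    apply hfg
    funext i
    have h2 := congrFun h i
    simp only [he] at h2
    exact_mod_cast h2
  have hsmul : e f = (2 : ℝ) • e g := by
    funext i
    have : g i + g i = f i := congrFun hgg i
    simp only [he, Pi.smul_apply, smul_eq_mul]
    push_cast [← this]
    ring
  have hmem : e f ∈ Submodule.span ℝ (T \ {e f}) := by
    have hgin : e g ∈ T \ {e f} := ⟨hcg, by simpa using hcfg.symm⟩
    have h2 := Submodule.smul_mem (Submodule.span ℝ (T \ {e f})) (2 : ℝ)
      (Submodule.subset_span hgin)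
    rwa [← hsmul] at h2
  have hspan' : Submodule.span ℝ (T \ {e f}) = ⊤ := by
    rw [← hspan]
    refine le_antisymm (Submodule.span_mono (Set.diff_subset)) ?_
    rw [Submodule.span_le]
    intro x hx
    by_cases hxf : x = e f
    · subst hxf; exact hmem
    · exact Submodule.subset_span ⟨hx, hxf⟩
  have hTfin : T.Finite := hfin.image e
  have hdiffin : (T \ {e f}).Finite := hTfin.diff
  have hrank : d ≤ hdiffin.toFinset.card := by
    have h1 := finrank_span_finset_le_card (R := ℝ) hdiffin.toFinset
    rw [Set.finrank, Set.Finite.coe_toFinset, hspan', finrank_top] at h1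
    simpa using h1
  have hc1 : hdiffin.toFinset.card = (T \ {e f}).ncard := by
    exact (Set.ncard_eq_toFinset_card _ hdiffin).symm
  have hc2 : (T \ {e f}).ncard = T.ncard - 1 :=
    Set.ncard_diff_singleton_of_mem hcf
  have hpos : 1 ≤ T.ncard := (Set.ncard_pos hTfin).2 ⟨_, hcf⟩
  have hTcard : d + 1 ≤ T.ncard := by omega
  have himg : T.ncard ≤ Sᶜ.ncard := Set.ncard_image_le hfin
  omega
end

section
/- If I ⊆ R = k[x_1,...,x_d] is a zero-dimensional monomial ideal, then d·dim_k(R/I) ≤ dim_k(I/I²). Equivalently, every monomial semigroup S ⊆ ℕ^d satisfies d·c(S) ≤ e(S). -/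
/-!
Write `B = Aᶜ` and slice `ℕ^(d+1)` by the last coordinate. Each slice `A_t` is again an upper
set with finite complement, and `|B| = ∑ₜ |A_tᶜ|`. Let `h z` be the height of the column of `B`
over `z ∈ ℕ^d`. For every `z ∉ A_t + A_t` the point `(z, h z + t)` lies in `A` but not in
`A + A`: a decomposition `(z₁, y₁) + (z₂, y₂)` with both summands in `A` would force
`y₁ + y₂ ≥ h z₁ + h z₂ > t + h z`, because one of `z₁, z₂` misses `A_t` and `h` is antitone.
These points are distinct for distinct `(z, t)`, so `|(A + A)ᶜ| ≥ |B| + ∑ₜ |(A_t + A_t)ᶜ|`,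
and induction on `d` gives `(d + 1)·|B| ≤ |(A + A)ᶜ|`.
-/

open Set
open scoped Pointwise

theorem IsUpperSet.add_subset {α : Type*} [AddZeroClass α] [Preorder α] [CanonicallyOrderedAdd α]
    {A : Set α} (hA : IsUpperSet A) : A + A ⊆ A := by
  rintro _ ⟨a, ha, a', -, rfl⟩
  exact hA le_self_add ha

theorem Set.Finite.compl_add_self {ι : Type*} [Finite ι] {A : Set (ι → ℕ)} (hA : Aᶜ.Finite) :
    (A + A)ᶜ.Finite := by
  have := Fintype.ofFinite ι
  classical
  refine (hA.biUnion fun b _ => finite_Iic (b + b + 1)).subset fun x hx => ?_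
  have hsplit : (fun i => (x i + 1) / 2) + (fun i => x i / 2) = x := funext fun i => by
    simp only [Pi.add_apply]; omega
  by_cases hhi : (fun i => (x i + 1) / 2) ∈ A
  · have hlo : (fun i => x i / 2) ∉ A := fun hlo => hx ⟨_, hhi, _, hlo, hsplit⟩
    exact mem_biUnion hlo fun i => by simp only [Pi.add_apply, Pi.one_apply]; omega
  · exact mem_biUnion hhi fun i => by simp only [Pi.add_apply, Pi.one_apply]; omega

namespace Staircase

variable {d : ℕ}

def slice (A : Set (Fin (d + 1) → ℕ)) (t : ℕ) : Set (Fin d → ℕ) :=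
  (fun z => (Fin.snoc z t : Fin (d + 1) → ℕ)) ⁻¹' A

noncomputable def height (A : Set (Fin (d + 1) → ℕ)) (z : Fin d → ℕ) : ℕ :=
  {y | (Fin.snoc z y : Fin (d + 1) → ℕ) ∉ A}.ncard

theorem snoc_le_snoc {z z' : Fin d → ℕ} {y y' : ℕ} (hz : z ≤ z') (hy : y ≤ y') :
    (Fin.snoc z y : Fin (d + 1) → ℕ) ≤ Fin.snoc z' y' := by
  intro i
  induction i using Fin.lastCases with
  | last => simpa using hy
  | cast j => simpa using hz j

theorem column_finite {A : Set (Fin (d + 1) → ℕ)} (hfin : Aᶜ.Finite) (z : Fin d → ℕ) :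
    {y | (Fin.snoc z y : Fin (d + 1) → ℕ) ∉ A}.Finite :=
  hfin.preimage (Fin.snoc_right_injective (α := fun _ => ℕ) z).injOn

theorem finite_compl_slice {A : Set (Fin (d + 1) → ℕ)} (hfin : Aᶜ.Finite) (t : ℕ) :
    (slice A t)ᶜ.Finite :=
  hfin.preimage (Fin.snoc_left_injective (α := fun _ => ℕ) t).injOn

theorem isUpperSet_slice {A : Set (Fin (d + 1) → ℕ)} (hA : IsUpperSet A) (t : ℕ) :
    IsUpperSet (slice A t) := fun _ _ hz hmem =>
  hA (snoc_le_snoc hz le_rfl) hmem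

section UpperSet

variable {A : Set (Fin (d + 1) → ℕ)} (hA : IsUpperSet A) (hfin : Aᶜ.Finite)
include hA hfin

theorem snoc_mem_iff_height_le {z : Fin d → ℕ} {y : ℕ} :
    (Fin.snoc z y : Fin (d + 1) → ℕ) ∈ A ↔ height A z ≤ y := by
  constructor
  · intro hy
    have hsub : {y' | (Fin.snoc z y' : Fin (d + 1) → ℕ) ∉ A} ⊆ Iio y := fun y' hy' => by
      by_contra hle
      exact hy' (hA (snoc_le_snoc le_rfl (not_lt.mp hle)) hy)
    exact (ncard_le_ncard hsub (finite_Iio y)).trans_eq (ncard_Iio_nat y)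
  · intro hle
    by_contra hy
    have hsub : Iic y ⊆ {y' | (Fin.snoc z y' : Fin (d + 1) → ℕ) ∉ A} := fun y' hy' hmem =>
      hy (hA (snoc_le_snoc le_rfl hy') hmem)
    have hcard := ncard_le_ncard hsub (column_finite hfin z)
    rw [ncard_Iic_nat] at hcard
    exact (hle.trans_lt hcard).false

theorem height_antitone : Antitone (height A) := fun z _ hz =>
  ncard_le_ncard (fun _ hy hmem => hy (hA (snoc_le_snoc hz le_rfl) hmem)) (column_finite hfin z)

theorem mem_slice_iff_height_le {t : ℕ} {z : Fin d → ℕ} : z ∈ slice A t ↔ height A z ≤ t :=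
  snoc_mem_iff_height_le hA hfin

theorem compl_eq_biUnion_slice :
    Aᶜ = ⋃ t ∈ (Finset.range (height A 0) : Set ℕ),
      (fun z => (Fin.snoc z t : Fin (d + 1) → ℕ)) '' (slice A t)ᶜ := by
  ext x
  simp only [mem_compl_iff, mem_iUnion, Finset.coe_range, mem_Iio, mem_image, exists_prop]
  constructor
  · intro hx
    have hlt : x (Fin.last d) < height A (Fin.init x) := by
      rw [← not_le, ← snoc_mem_iff_height_le hA hfin, Fin.snoc_init_self]
      exact hx
    exact ⟨x (Fin.last d), hlt.trans_le (height_antitone hA hfin zero_le), Fin.init x,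
      by rwa [slice, mem_preimage, Fin.snoc_init_self], Fin.snoc_init_self x⟩
  · rintro ⟨t, -, z, hz, rfl⟩
    exact hz

theorem snoc_height_add_notMem_add {t : ℕ} {z : Fin d → ℕ} (hz : z ∉ slice A t + slice A t) :
    (Fin.snoc z (height A z + t) : Fin (d + 1) → ℕ) ∉ A + A := by
  rintro ⟨u, hu, v, hv, huv⟩
  have hinit : Fin.init u + Fin.init v = z := (congrArg Fin.init huv).trans (Fin.init_snoc _ _)
  have hlast : u (Fin.last d) + v (Fin.last d) = height A z + t :=
    (congrFun huv (Fin.last d)).trans (Fin.snoc_last _ _)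
  rw [← Fin.snoc_init_self u, snoc_mem_iff_height_le hA hfin] at hu
  rw [← Fin.snoc_init_self v, snoc_mem_iff_height_le hA hfin] at hv
  have hu_le : height A z ≤ height A (Fin.init u) :=
    height_antitone hA hfin (hinit ▸ le_self_add)
  have hv_le : height A z ≤ height A (Fin.init v) :=
    height_antitone hA hfin (hinit ▸ le_add_self)
  have hmiss : Fin.init u ∉ slice A t ∨ Fin.init v ∉ slice A t := by
    by_contra! h
    exact hz ⟨_, h.1, _, h.2, hinit⟩
  simp only [mem_slice_iff_height_le hA hfin, not_le] at hmiss
  omega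

end UpperSet

theorem ncard_biUnion_image_snoc (f : ℕ → (Fin d → ℕ) → ℕ) (hf : ∀ z, (f · z).Injective)
    {F : ℕ → Set (Fin d → ℕ)} (hF : ∀ t, (F t).Finite) (s : Finset ℕ) :
    (⋃ t ∈ (s : Set ℕ), (fun z => (Fin.snoc z (f t z) : Fin (d + 1) → ℕ)) '' F t).ncard =
      ∑ t ∈ s, (F t).ncard := by
  rw [s.finite_toSet.ncard_biUnion (fun t _ => (hF t).image _), finsum_mem_coe_finset]
  · refine Finset.sum_congr rfl fun t _ => ncard_image_of_injective _ fun z z' h => ?_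
    exact (Fin.snoc_inj.mp h).1
  · intro t _ t' _ htt'
    rw [Function.onFun, disjoint_left]
    rintro _ ⟨z, -, rfl⟩ ⟨z', -, h⟩
    obtain ⟨rfl, h⟩ := Fin.snoc_inj.mp h
    exact htt' (hf _ h.symm)

theorem card_compl_le_card_compl_add_self {A : Set (Fin d → ℕ)} (hA : IsUpperSet A)
    (hfin : Aᶜ.Finite) : (d + 1) * Aᶜ.ncard ≤ (A + A)ᶜ.ncard := by
  induction d with
  | zero =>
    simpa using ncard_le_ncard (compl_subset_compl.mpr hA.add_subset) hfin.compl_add_self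
  | succ d ih =>
    set T := height A 0
    set E := ⋃ t ∈ (Finset.range T : Set ℕ),
      (fun z => (Fin.snoc z (height A z + t) : Fin (d + 1) → ℕ)) '' (slice A t + slice A t)ᶜ
    have hB : Aᶜ.ncard = ∑ t ∈ Finset.range T, (slice A t)ᶜ.ncard := by
      rw [compl_eq_biUnion_slice hA hfin]
      exact ncard_biUnion_image_snoc (fun t _ => t) (fun _ => Function.injective_id)
        (finite_compl_slice hfin) _
    have hE : E.ncard = ∑ t ∈ Finset.range T, (slice A t + slice A t)ᶜ.ncard :=
      ncard_biUnion_image_snoc (fun t z => height A z + t) (fun z => add_right_injective _)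
        (fun t => (finite_compl_slice hfin t).compl_add_self) _
    have hE_sub : E ⊆ (A + A)ᶜ := iUnion₂_subset fun t _ =>
      image_subset_iff.mpr fun _ hz => snoc_height_add_notMem_add hA hfin hz
    have hE_mem : E ⊆ A := iUnion₂_subset fun t _ =>
      image_subset_iff.mpr fun _ _ => (snoc_mem_iff_height_le hA hfin).mpr le_self_add
    calc (d + 1 + 1) * Aᶜ.ncard
        = Aᶜ.ncard + ∑ t ∈ Finset.range T, (d + 1) * (slice A t)ᶜ.ncard := by
          rw [add_one_mul, hB, Finset.mul_sum, add_comm]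
      _ ≤ Aᶜ.ncard + E.ncard := by
          rw [hE]
          gcongr with t
          exact ih (isUpperSet_slice hA t) (finite_compl_slice hfin t)
      _ = (Aᶜ ∪ E).ncard :=
          (ncard_union_eq (disjoint_compl_left_iff_subset.mpr hE_mem) hfin
            (hfin.compl_add_self.subset hE_sub)).symm
      _ ≤ (A + A)ᶜ.ncard :=
          ncard_le_ncard (union_subset (compl_subset_compl.mpr hA.add_subset) hE_sub)
            hfin.compl_add_self

end Staircase

/-- combinatorial form: if `A ⊆ ℕ^d` is upward closed in the
componentwise order with finite complement `B` (i.e. `A` is the exponent set of a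
zero-dimensional monomial ideal `I`, so `|B| = dim_k(R/I)` and
`|A \ (A+A)| = dim_k(I/I²)`), then `d·|B| ≤ |A \ (A + A)|`. -/
theorem stmt15 {d : ℕ} (A : Set (Fin d → ℕ))
    (hup : ∀ a ∈ A, ∀ b, a ≤ b → b ∈ A) (hfin : Aᶜ.Finite) :
    d * Aᶜ.ncard ≤ (A \ {x | ∃ a ∈ A, ∃ a' ∈ A, x = a + a'}).ncard := by
  have hA : IsUpperSet A := fun a b hab ha => hup a ha b hab
  have hsumset : {x | ∃ a ∈ A, ∃ a' ∈ A, x = a + a'} = A + A := by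
    ext
    simp only [mem_ofPred_eq, mem_add, eq_comm]
  rw [hsumset, sdiff_eq, inter_comm, ← sdiff_compl,
    ncard_sdiff (compl_subset_compl.mpr hA.add_subset) hfin]
  have hcard := Staircase.card_compl_le_card_compl_add_self hA hfin
  rw [add_one_mul] at hcard
  omega
end

section
/- Let I ⊆ R = k[x_1,...,x_{d-1},y] be a zero-dimensional monomial ideal, R̄ = R/⟨y⟩ ≅ k[x_1,...,x_{d-1}], and Ī = (I + ⟨y⟩)/⟨y⟩. Then dim_k(R̄/Ī) ≤ dim_k((I:y)²/(I²:y)). -/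
/-- A monomial ideal: an ideal containing, with any polynomial, each of its monomials. -/
def IsMonomialIdeal {k : Type*} [Field k] {σ : Type*} (I : Ideal (MvPolynomial σ k)) : Prop :=
  ∀ p ∈ I, ∀ m ∈ p.support, (MvPolynomial.monomial m (1 : k)) ∈ I

/-- The `k`-vector space dimension of the quotient `A/B` of an ideal `A` by an
ideal `B`. -/
noncomputable def idealQuotDim (k : Type*) [Field k] {R : Type*} [CommRing R]
    [Algebra k R] (A B : Ideal R) : ℕ :=
  Module.finrank k
    (↥(A.restrictScalars k) ⧸
      (Submodule.comap (A.restrictScalars k).subtype (B.restrictScalars k)))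

/-!
The monomials `x^ν` with `x^ν ∉ I` span `R̄/Ī`. For each such `ν` let `β` be the least exponent
with `x^ν y^β ∈ I²`, and write `x^ν y^β` as a multiple of a product of two monomials of `I`.
Neither factor can be free of `y`, since it would then divide `x^ν`; stripping one `y` from each
shows `β ≥ 2` and `x^ν y^(β-2) ∈ (I:y)²`, while minimality of `β` gives `x^ν y^(β-2) ∉ I²:y`.
These monomials are distinct, hence linearly independent modulo the monomial ideal `I²:y`.
-/

open MvPolynomial Pointwise

theorem card_le_idealQuotDim_of_linearIndependent {k R : Type*} [Field k] [CommRing R]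
    [Algebra k R] {A B : Ideal R} [FiniteDimensional k (R ⧸ B)] {ι : Type*} [Fintype ι]
    {v : ι → R} (hvA : ∀ i, v i ∈ A) (hv : LinearIndependent k fun i => Ideal.Quotient.mk B (v i)) :
    Fintype.card ι ≤ idealQuotDim k A B := by
  set A' := A.restrictScalars k
  set B' := Submodule.comap A'.subtype (B.restrictScalars k)
  let f : A' →ₗ[k] R ⧸ B := (Ideal.Quotient.mkₐ k B).toLinearMap ∘ₗ A'.subtype
  have hker : B' = LinearMap.ker f := by
    ext x
    simp [B', f, Ideal.Quotient.eq_zero_iff_mem]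
  have hinj : Function.Injective (B'.liftQ f hker.le) :=
    LinearMap.ker_eq_bot.mp (B'.ker_liftQ_eq_bot' f hker)
  have := Module.Finite.of_injective _ hinj
  have hw : LinearIndependent k fun i => B'.mkQ ⟨v i, hvA i⟩ :=
    LinearIndependent.of_comp (B'.liftQ f hker.le) hv
  exact hw.fintype_card_le_finrank

namespace MvPolynomial

section CommSemiring

variable {R σ : Type*} [CommSemiring R]

theorem monomial_one_mem_of_le {I : Ideal (MvPolynomial σ R)} {s m : σ →₀ ℕ}
    (hs : monomial s (1 : R) ∈ I) (h : s ≤ m) : monomial m (1 : R) ∈ I := by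
  rw [← tsub_add_cancel_of_le h, ← one_mul (1 : R), ← monomial_mul]
  exact I.mul_mem_left _ hs

theorem monomial_mem_colon_span_X_iff {I : Ideal (MvPolynomial σ R)} {m : σ →₀ ℕ} {v : σ} :
    monomial m (1 : R) ∈ I.colon (Ideal.span {X v} : Ideal (MvPolynomial σ R)) ↔
      monomial (m + Finsupp.single v 1) (1 : R) ∈ I := by
  rw [Ideal.mem_colon_span_singleton, X, monomial_mul, mul_one]

theorem finite_setOf_monomial_notMem_of_single_mem [Finite σ] {I : Ideal (MvPolynomial σ R)}
    (h : ∀ v, ∃ N, monomial (Finsupp.single v N) (1 : R) ∈ I) :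
    {m | monomial m (1 : R) ∉ I}.Finite := by
  classical
  cases nonempty_fintype σ
  choose N hN using h
  refine (Set.finite_Iic (Finsupp.equivFunOnFinite.symm N)).subset fun m hm v => ?_
  exact not_lt.mp fun hv => hm (monomial_one_mem_of_le (hN v) (Finsupp.single_le_iff.mpr hv.le))

theorem aeval_monomial_eq_zero {A : Type*} [CommSemiring A] [Algebra R A] {f : σ → A} {v : σ}
    (hf : f v = 0) {m : σ →₀ ℕ} (hm : m v ≠ 0) (c : R) : aeval f (monomial m c) = 0 := by
  rw [aeval_monomial, Finsupp.prod, Finset.prod_eq_zero (Finsupp.mem_support_iff.mpr hm)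
    (by rw [hf, zero_pow hm]), mul_zero]

end CommSemiring

variable {k σ : Type*} [Field k]

theorem span_range_monomial_eq_top_of_surjective {M : Type*} [AddCommGroup M] [Module k M]
    {g : MvPolynomial σ k →ₗ[k] M} (hg : Function.Surjective g) :
    Submodule.span k (Set.range fun m : {m // g (monomial m 1) ≠ 0} => g (monomial m 1)) = ⊤ := by
  refine Submodule.eq_top_iff'.mpr fun x => ?_
  obtain ⟨f, rfl⟩ := hg x
  rw [f.as_sum, map_sum]
  refine Submodule.sum_mem _ fun m _ => ?_
  rw [← mul_one (coeff m f), ← smul_eq_mul, ← smul_monomial, map_smul]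
  refine Submodule.smul_mem _ _ ?_
  by_cases hm : g (monomial m 1) = 0
  · rw [hm]
    exact Submodule.zero_mem _
  · exact Submodule.subset_span ⟨⟨m, hm⟩, rfl⟩

theorem finrank_le_ncard_of_surjective {M : Type*} [AddCommGroup M] [Module k M]
    {g : MvPolynomial σ k →ₗ[k] M} (hg : Function.Surjective g)
    (hfin : {m | g (monomial m 1) ≠ 0}.Finite) :
    Module.finrank k M ≤ {m | g (monomial m 1) ≠ 0}.ncard := by
  have := hfin.fintype
  rw [Set.ncard_eq_toFinset_card', Set.toFinset_card]
  exact finrank_le_of_span_eq_top (span_range_monomial_eq_top_of_surjective hg)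

theorem finiteDimensional_quotient_of_finite {I : Ideal (MvPolynomial σ k)}
    (hfin : {m | monomial m (1 : k) ∉ I}.Finite) : FiniteDimensional k (MvPolynomial σ k ⧸ I) := by
  set g := (Ideal.Quotient.mkₐ k I).toLinearMap
  have hset : {m | g (monomial m 1) ≠ 0} = {m | monomial m (1 : k) ∉ I} := by
    ext m
    simp [g, Ideal.Quotient.eq_zero_iff_mem]
  have : Finite {m // g (monomial m 1) ≠ 0} := (hset ▸ hfin).to_subtype
  exact Module.finite_def.mpr (Submodule.fg_def.mpr ⟨_, Set.finite_range _,
    span_range_monomial_eq_top_of_surjective (g := g) (Ideal.Quotient.mkₐ_surjective k I)⟩)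

theorem isMonomialIdeal_span_monomial (S : Set (σ →₀ ℕ)) :
    IsMonomialIdeal (Ideal.span ((fun s => monomial s (1 : k)) '' S)) := by
  intro p hp m hm
  obtain ⟨s, hs, hsm⟩ := mem_ideal_span_monomial_image.mp hp m hm
  exact monomial_one_mem_of_le (Ideal.subset_span ⟨s, hs, rfl⟩) hsm

end MvPolynomial

namespace IsMonomialIdeal

variable {k σ : Type*} [Field k] {I : Ideal (MvPolynomial σ k)}

theorem eq_span (hI : IsMonomialIdeal I) :
    I = Ideal.span ((fun s => monomial s (1 : k)) '' {m | monomial m (1 : k) ∈ I}) := by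
  refine le_antisymm (fun f hf => ?_) (Ideal.span_le.mpr ?_)
  · exact mem_ideal_span_monomial_image.mpr fun m hm => ⟨m, hI f hf m hm, le_rfl⟩
  · rintro _ ⟨m, hm, rfl⟩
    exact hm

theorem sq_eq_span (hI : IsMonomialIdeal I) :
    I ^ 2 = Ideal.span ((fun s => monomial s (1 : k)) ''
      ({m | monomial m (1 : k) ∈ I} + {m | monomial m (1 : k) ∈ I})) := by
  set M := {m | monomial m (1 : k) ∈ I}
  rw [pow_two, hI.eq_span, Ideal.span_mul_span]
  congr 1
  ext p
  simp only [Set.mem_mul, Set.mem_image, Set.mem_add]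
  constructor
  · rintro ⟨_, ⟨s, hs, rfl⟩, _, ⟨t, ht, rfl⟩, rfl⟩
    exact ⟨s + t, ⟨s, hs, t, ht, rfl⟩, by rw [monomial_mul, one_mul]⟩
  · rintro ⟨_, ⟨s, hs, t, ht, rfl⟩, rfl⟩
    exact ⟨_, ⟨s, hs, rfl⟩, _, ⟨t, ht, rfl⟩, by rw [monomial_mul, one_mul]⟩

theorem sq (hI : IsMonomialIdeal I) : IsMonomialIdeal (I ^ 2) :=
  hI.sq_eq_span ▸ isMonomialIdeal_span_monomial _

theorem exists_add_le_of_monomial_mem_sq (hI : IsMonomialIdeal I) {m : σ →₀ ℕ}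
    (hm : monomial m (1 : k) ∈ I ^ 2) :
    ∃ s t, monomial s (1 : k) ∈ I ∧ monomial t (1 : k) ∈ I ∧ s + t ≤ m := by
  classical
  rw [hI.sq_eq_span, mem_ideal_span_monomial_image] at hm
  obtain ⟨_, ⟨s, hs, t, ht, rfl⟩, hle⟩ := hm m (by simp [support_monomial])
  exact ⟨s, t, hs, ht, hle⟩

theorem colon_span_X (hI : IsMonomialIdeal I) (v : σ) :
    IsMonomialIdeal (I.colon (Ideal.span {X v} : Ideal (MvPolynomial σ k))) := by
  intro p hp m hm
  rw [Ideal.mem_colon_span_singleton] at hp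
  rw [monomial_mem_colon_span_X_iff]
  refine hI _ hp _ ?_
  rwa [mem_support_iff, coeff_mul_X, ← mem_support_iff]

theorem linearIndependent_mk_monomial (hI : IsMonomialIdeal I) {ι : Type*}
    {d : ι → σ →₀ ℕ} (hd : Function.Injective d) (hdI : ∀ i, monomial (d i) (1 : k) ∉ I) :
    LinearIndependent k fun i => Ideal.Quotient.mk I (monomial (d i) (1 : k)) := by
  classical
  refine linearIndependent_iff'.mpr fun s c hc i hi => by_contra fun hci => hdI i ?_
  have hmem : ∑ j ∈ s, monomial (d j) (c j) ∈ I := by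
    rw [← Ideal.Quotient.eq_zero_iff_mem, map_sum, ← hc]
    refine Finset.sum_congr rfl fun j _ => ?_
    rw [← Ideal.Quotient.mkₐ_eq_mk k, ← map_smul, smul_monomial, smul_eq_mul, mul_one]
  have hcoeff : coeff (d i) (∑ j ∈ s, monomial (d j) (c j)) = c i := by
    rw [coeff_sum, Finset.sum_eq_single i (fun j _ hji => by
      rw [coeff_monomial, if_neg (hd.ne hji)]) (fun h => absurd hi h), coeff_monomial, if_pos rfl]
  exact hI _ hmem _ (mem_support_iff.mpr (hcoeff ▸ hci))

theorem finite_setOf_monomial_notMem (hI : IsMonomialIdeal I)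
    [FiniteDimensional k (MvPolynomial σ k ⧸ I)] : {m | monomial m (1 : k) ∉ I}.Finite :=
  Set.finite_coe_iff.mp
    (hI.linearIndependent_mk_monomial Subtype.val_injective fun m => m.2).finite

theorem exists_monomial_single_mem (hI : IsMonomialIdeal I)
    [FiniteDimensional k (MvPolynomial σ k ⧸ I)] (v : σ) :
    ∃ N, monomial (Finsupp.single v N) (1 : k) ∈ I := by
  by_contra! h
  exact Set.infinite_of_injective_forall_mem (Finsupp.single_injective v) h
    hI.finite_setOf_monomial_notMem

theorem exists_eq_add_two_of_monomial_add_single_mem_sq (hI : IsMonomialIdeal I)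
    {m : σ →₀ ℕ} {v : σ} {c : ℕ} (hmv : m v = 0) (hm : monomial m (1 : k) ∉ I)
    (hc : monomial (m + Finsupp.single v c) (1 : k) ∈ I ^ 2) :
    ∃ a, c = a + 2 ∧ monomial (m + Finsupp.single v a) (1 : k) ∈
      I.colon (Ideal.span {X v} : Ideal (MvPolynomial σ k)) ^ 2 := by
  obtain ⟨s, t, hs, ht, hst⟩ := hI.exists_add_le_of_monomial_mem_sq hc
  have hle (w : σ) : s w + t w ≤ m w + Finsupp.single v c w := by simpa using hst w
  -- a factor of degree 0 in `v` would divide `m`, which lies outside `I`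
  have one_le {u : σ →₀ ℕ} (hu : monomial u (1 : k) ∈ I) (hum : ∀ w ≠ v, u w ≤ m w) :
      1 ≤ u v := by
    refine Nat.one_le_iff_ne_zero.mpr fun huv => hm (monomial_one_mem_of_le hu fun w => ?_)
    obtain rfl | hw := eq_or_ne w v
    · simp [huv]
    · exact hum w hw
  have hsv := one_le hs fun w hw => by
    have := hle w
    rw [Finsupp.single_eq_of_ne hw] at this
    omega
  have htv := one_le ht fun w hw => by
    have := hle w
    rw [Finsupp.single_eq_of_ne hw] at this
    omega
  have hcv : s v + t v ≤ c := by simpa [hmv] using hle v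
  have mem_colon {u : σ →₀ ℕ} (hu : monomial u (1 : k) ∈ I) (huv : 1 ≤ u v) :
      monomial (u - Finsupp.single v 1) (1 : k) ∈
        I.colon (Ideal.span {X v} : Ideal (MvPolynomial σ k)) := by
    rwa [monomial_mem_colon_span_X_iff, tsub_add_cancel_of_le (Finsupp.single_le_iff.mpr huv)]
  refine ⟨c - 2, by omega, monomial_one_mem_of_le
    (s := (s - Finsupp.single v 1) + (t - Finsupp.single v 1)) ?_ fun w => ?_⟩
  · rw [← one_mul (1 : k), ← monomial_mul, pow_two]
    exact Ideal.mul_mem_mul (mem_colon hs hsv) (mem_colon ht htv)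
  · have := hle w
    obtain rfl | hw := eq_or_ne w v
    · simp only [Finsupp.add_apply, Finsupp.tsub_apply, Finsupp.single_eq_same] at this ⊢
      omega
    · simp only [Finsupp.add_apply, Finsupp.tsub_apply, Finsupp.single_eq_of_ne hw] at this ⊢
      omega

theorem ncard_le_idealQuotDim_colon_span_X [Finite σ] (hI : IsMonomialIdeal I)
    [FiniteDimensional k (MvPolynomial σ k ⧸ I)] (v : σ) :
    {m : σ →₀ ℕ | m v = 0 ∧ monomial m (1 : k) ∉ I}.ncard ≤
      idealQuotDim k (I.colon (Ideal.span {X v} : Ideal (MvPolynomial σ k)) ^ 2)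
        ((I ^ 2).colon (Ideal.span {X v} : Ideal (MvPolynomial σ k))) := by
  classical
  set S := {m : σ →₀ ℕ | m v = 0 ∧ monomial m (1 : k) ∉ I}
  set K := (I ^ 2).colon (Ideal.span {X v} : Ideal (MvPolynomial σ k))
  choose N hN using hI.exists_monomial_single_mem
  have hsq (w : σ) : monomial (Finsupp.single w (2 * N w)) (1 : k) ∈ I ^ 2 := by
    simpa [monomial_pow] using Ideal.pow_mem_pow (hN w) 2
  have hex (m : σ →₀ ℕ) : ∃ c, monomial (m + Finsupp.single v c) (1 : k) ∈ I ^ 2 :=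
    ⟨2 * N v, monomial_one_mem_of_le (hsq v) le_add_self⟩
  have : FiniteDimensional k (MvPolynomial σ k ⧸ K) :=
    finiteDimensional_quotient_of_finite <| finite_setOf_monomial_notMem_of_single_mem
      fun w => ⟨2 * N w, Ideal.mem_colon_span_singleton.mpr (Ideal.mul_mem_right _ _ (hsq w))⟩
  -- the monomial attached to `m ∈ S` is `m y^a`, where `a + 2` is least with `m y^(a+2) ∈ I²`
  have ha (m : S) := hI.exists_eq_add_two_of_monomial_add_single_mem_sq m.2.1 m.2.2
    (Nat.find_spec (hex m))
  choose a ha hmemJ using ha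
  have hnotK (m : S) : monomial ((m : σ →₀ ℕ) + Finsupp.single v (a m)) (1 : k) ∉ K := by
    rw [monomial_mem_colon_span_X_iff, add_assoc, ← Finsupp.single_add]
    exact Nat.find_min (hex m) (by have := ha m; omega)
  have hinj : Function.Injective fun m : S => (m : σ →₀ ℕ) + Finsupp.single v (a m) := by
    intro m₁ m₂ h
    ext w
    obtain rfl | hw := eq_or_ne w v
    · rw [m₁.2.1, m₂.2.1]
    · simpa [Finsupp.single_eq_of_ne hw] using DFunLike.congr_fun h w
  have := (hI.finite_setOf_monomial_notMem.subset fun m (hm : m ∈ S) => hm.2).fintype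
  rw [Set.ncard_eq_toFinset_card', Set.toFinset_card]
  exact card_le_idealQuotDim_of_linearIndependent hmemJ
    ((hI.sq.colon_span_X v).linearIndependent_mk_monomial hinj hnotK)

end IsMonomialIdeal

theorem finrank_quotient_map_aeval_le_ncard {k τ : Type*} [Field k]
    (I : Ideal (MvPolynomial (τ ⊕ Unit) k))
    (hfin : {m : (τ ⊕ Unit) →₀ ℕ | m (Sum.inr ()) = 0 ∧ monomial m (1 : k) ∉ I}.Finite) :
    Module.finrank k (MvPolynomial τ k ⧸ I.map (aeval
      (Sum.elim X (fun _ => 0) : τ ⊕ Unit → MvPolynomial τ k)).toRingHom) ≤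
    {m : (τ ⊕ Unit) →₀ ℕ | m (Sum.inr ()) = 0 ∧ monomial m (1 : k) ∉ I}.ncard := by
  set π := aeval (R := k) (Sum.elim X (fun _ => 0) : τ ⊕ Unit → MvPolynomial τ k)
  set g := (Ideal.Quotient.mkₐ k (I.map π.toRingHom)).toLinearMap ∘ₗ π.toLinearMap
  have hπ : Function.Surjective π := fun p => ⟨rename Sum.inl p, by
    rw [aeval_rename, Sum.elim_comp_inl, aeval_X_left_apply]⟩
  have hg : Function.Surjective g := (Ideal.Quotient.mkₐ_surjective k _).comp hπ
  have hsub : {m | g (monomial m 1) ≠ 0} ⊆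
      {m | m (Sum.inr ()) = 0 ∧ monomial m (1 : k) ∉ I} := by
    refine fun m hm => ⟨by_contra fun hmy => hm ?_, fun hmI => hm ?_⟩
    · change Ideal.Quotient.mkₐ k _ (π (monomial m 1)) = 0
      rw [aeval_monomial_eq_zero (v := Sum.inr ()) rfl hmy, map_zero]
    · exact Ideal.Quotient.eq_zero_iff_mem.mpr (Ideal.mem_map_of_mem _ hmI)
  exact (finrank_le_ncard_of_surjective hg (hfin.subset hsub)).trans
    (Set.ncard_le_ncard hsub hfin)

theorem stmt16_general (k : Type*) [Field k] {n : ℕ}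
    (I : Ideal (MvPolynomial (Fin n ⊕ Unit) k))
    (hmon : IsMonomialIdeal I)
    (hfd : FiniteDimensional k (MvPolynomial (Fin n ⊕ Unit) k ⧸ I)) :
    Module.finrank k
      (MvPolynomial (Fin n) k ⧸
        I.map (MvPolynomial.aeval
          (Sum.elim MvPolynomial.X (fun _ => 0) :
            Fin n ⊕ Unit → MvPolynomial (Fin n) k)).toRingHom) ≤
    idealQuotDim k
      ((I.colon ((Ideal.span {MvPolynomial.X (Sum.inr ())} : Ideal (MvPolynomial (Fin n ⊕ Unit) k)) :
        Set (MvPolynomial (Fin n ⊕ Unit) k))) ^ 2)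
      ((I ^ 2).colon ((Ideal.span {MvPolynomial.X (Sum.inr ())} : Ideal (MvPolynomial (Fin n ⊕ Unit) k)) :
        Set (MvPolynomial (Fin n ⊕ Unit) k))) :=
  (finrank_quotient_map_aeval_le_ncard I
    (hmon.finite_setOf_monomial_notMem.subset fun _ hm => hm.2)).trans
    (hmon.ncard_le_idealQuotDim_colon_span_X (Sum.inr ()))

/-- for a zero-dimensional monomial ideal
`I ⊆ R = k[x_1,…,x_{d-1},y]` (variables indexed by `Fin n ⊕ Unit`, with `y` the
last variable), setting `R̄ = R/⟨y⟩ ≅ k[x_1,…,x_{d-1}]` and `Ī = (I+⟨y⟩)/⟨y⟩`,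
one has `dim_k(R̄/Ī) ≤ dim_k((I:y)²/(I²:y))`. -/
theorem stmt16 (k : Type*) [Field k] {n : ℕ}
    (I : Ideal (MvPolynomial (Fin n ⊕ Unit) k))
    (hmon : IsMonomialIdeal I) (hproper : I ≠ ⊤)
    (hfd : FiniteDimensional k (MvPolynomial (Fin n ⊕ Unit) k ⧸ I)) :
    Module.finrank k
      (MvPolynomial (Fin n) k ⧸
        I.map (MvPolynomial.aeval
          (Sum.elim MvPolynomial.X (fun _ => 0) :
            Fin n ⊕ Unit → MvPolynomial (Fin n) k)).toRingHom) ≤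
    idealQuotDim k
      ((I.colon ((Ideal.span {MvPolynomial.X (Sum.inr ())} : Ideal (MvPolynomial (Fin n ⊕ Unit) k)) :
        Set (MvPolynomial (Fin n ⊕ Unit) k))) ^ 2)
      ((I ^ 2).colon ((Ideal.span {MvPolynomial.X (Sum.inr ())} : Ideal (MvPolynomial (Fin n ⊕ Unit) k)) :
        Set (MvPolynomial (Fin n ⊕ Unit) k))) :=
  stmt16_general k I hmon hfd
end

section
/- For a zero-dimensional monomial ideal I ⊆ R = k[x_1,...,x_d], equality d·dim_k(R/I) = dim_k(I/I²) holds if and only if I is a complete intersection, i.e., I = ⟨x_1^{a_1},...,x_d^{a_d}⟩ for some positive integers a_1,...,a_d. -/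
open Finset
namespace Stmt17
abbrev Pt (d : ℕ) := Fin d → ℕ

def sumset {d : ℕ} (A : Set (Pt d)) : Set (Pt d) := {x | ∃ a ∈ A, ∃ a' ∈ A, x = a + a'}
def Up {d : ℕ} (A : Set (Pt d)) : Prop := ∀ a ∈ A, ∀ b, a ≤ b → b ∈ A
def Down {d : ℕ} (P : Set (Pt d)) : Prop := ∀ p ∈ P, ∀ q, q ≤ p → q ∈ P
def CI {d : ℕ} (A : Set (Pt d)) : Prop :=
  ∃ a : Pt d, (∀ i, 0 < a i) ∧ A = {x | ∃ i, a i ≤ x i}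
def SETp (d : ℕ) : Prop := ∀ A : Set (Pt d), Up A → (Aᶜ).Finite → 0 ∉ A →
  ((sumset A)ᶜ).Finite ∧ (d+1) * (Aᶜ).ncard ≤ ((sumset A)ᶜ).ncard ∧
  ((d+1) * (Aᶜ).ncard = ((sumset A)ᶜ).ncard ↔ CI A)

noncomputable def conv {e : ℕ} (m : Pt e → ℕ) (z : Pt e) : ℕ :=
  sInf {n | ∃ u v : Pt e, u + v = z ∧ n = m u + m v}

open scoped Classical in
noncomputable def chi {e : ℕ} (P : Set (Pt e)) (z : Pt e) : ℕ := if z ∈ P then 1 else 0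

lemma chi_pos {e : ℕ} {P : Set (Pt e)} {z : Pt e} (h : z ∈ P) : chi P z = 1 := by simp [chi, h]
lemma chi_neg {e : ℕ} {P : Set (Pt e)} {z : Pt e} (h : z ∉ P) : chi P z = 0 := by simp [chi, h]
lemma chi_le_one {e : ℕ} (P : Set (Pt e)) (z : Pt e) : chi P z ≤ 1 := by
  unfold chi; split <;> simp

lemma conv_set_nonempty {e : ℕ} (m : Pt e → ℕ) (z : Pt e) :
    {n | ∃ u v : Pt e, u + v = z ∧ n = m u + m v}.Nonempty :=
  ⟨m z + m 0, z, 0, by simp, rfl⟩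
lemma conv_le {e : ℕ} (m : Pt e → ℕ) {u v z : Pt e} (h : u + v = z) :
    conv m z ≤ m u + m v := Nat.sInf_le ⟨u, v, h, rfl⟩
lemma exists_conv {e : ℕ} (m : Pt e → ℕ) (z : Pt e) :
    ∃ u v : Pt e, u + v = z ∧ conv m z = m u + m v :=
  Nat.sInf_mem (conv_set_nonempty m z)
lemma le_conv {e : ℕ} {m : Pt e → ℕ} {z : Pt e} {n : ℕ}
    (h : ∀ u v : Pt e, u + v = z → n ≤ m u + m v) : n ≤ conv m z := by
  obtain ⟨u, v, huv, hc⟩ := exists_conv m z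
  exact hc ▸ h u v huv
lemma conv_mono {e : ℕ} {f g : Pt e → ℕ} (h : ∀ z, f z ≤ g z) (z : Pt e) :
    conv f z ≤ conv g z := by
  obtain ⟨u, v, huv, hc⟩ := exists_conv g z
  exact hc ▸ le_trans (conv_le f huv) (add_le_add (h u) (h v))
lemma conv_superadd {e : ℕ} (f g : Pt e → ℕ) (z : Pt e) :
    conv f z + conv g z ≤ conv (fun w => f w + g w) z := by
  refine le_conv (fun u v huv => ?_)
  calc conv f z + conv g z ≤ (f u + f v) + (g u + g v) :=
        add_le_add (conv_le f huv) (conv_le g huv)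
    _ = (f u + g u) + (f v + g v) := by ring
lemma conv_mul {e : ℕ} (K : ℕ) (m : Pt e → ℕ) (z : Pt e) :
    conv (fun w => K * m w) z = K * conv m z := by
  apply le_antisymm
  · obtain ⟨u, v, huv, hc⟩ := exists_conv m z
    exact le_trans (conv_le _ huv) (by rw [hc]; ring_nf; omega)
  · obtain ⟨u, v, huv, hc⟩ := exists_conv (fun w => K * m w) z
    rw [hc]
    have := conv_le m huv
    nlinarith

lemma le_of_add_eq_left {e : ℕ} {u v z : Pt e} (h : u + v = z) : u ≤ z := h ▸ le_self_add
lemma le_of_add_eq_right {e : ℕ} {u v z : Pt e} (h : u + v = z) : v ≤ z := h ▸ le_add_self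

lemma mem_D_of_mem {e : ℕ} {P : Set (Pt e)} (hd : Down P) {z : Pt e} (hz : z ∈ P) :
    z ∈ (sumset Pᶜ)ᶜ := by
  intro ⟨a, ha, a', ha', hzz⟩
  exact ha (hd z hz a (le_of_add_eq_left hzz.symm))

lemma conv_chi {e : ℕ} {P : Set (Pt e)} (hd : Down P) (h0 : (0 : Pt e) ∈ P) (z : Pt e) :
    conv (chi P) z = chi P z + chi ((sumset Pᶜ)ᶜ) z := by
  by_cases hz : z ∈ P
  · rw [chi_pos hz, chi_pos (mem_D_of_mem hd hz)]
    apply le_antisymm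
    · have := conv_le (chi P) (add_zero z)
      rw [chi_pos hz, chi_pos h0] at this; exact this
    · refine le_conv (fun u v huv => ?_)
      rw [chi_pos (hd z hz u (le_of_add_eq_left huv)),
        chi_pos (hd z hz v (le_of_add_eq_right huv))]
  · rw [chi_neg hz]
    by_cases hD : z ∈ (sumset Pᶜ)ᶜ
    · rw [chi_pos hD]
      apply le_antisymm
      · have := conv_le (chi P) (add_zero z)
        rw [chi_neg hz, chi_pos h0] at this; simpa using this
      · refine le_conv (fun u v huv => ?_)
        by_cases hu : u ∈ P
        · rw [chi_pos hu]; omega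
        · by_cases hv : v ∈ P
          · rw [chi_pos hv]; omega
          · exact absurd (⟨u, hu, v, hv, huv.symm⟩ : z ∈ sumset Pᶜ) hD
    · rw [chi_neg hD]
      have hD' : z ∈ sumset Pᶜ := by simpa using hD
      obtain ⟨a, ha, a', ha', hzz⟩ := hD'
      have := conv_le (chi P) hzz.symm
      rw [chi_neg ha, chi_neg ha'] at this
      omega

/-- key per-level inequality used at every split -/
lemma chi_split_le {e : ℕ} {P : Set (Pt e)} (hd : Down P) {u v z : Pt e}
    (huv : u + v = z) : chi P z + chi ((sumset Pᶜ)ᶜ) z ≤ chi P u + chi P v := by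
  by_cases hz : z ∈ P
  · rw [chi_pos hz, chi_pos (mem_D_of_mem hd hz),
      chi_pos (hd z hz u (le_of_add_eq_left huv)), chi_pos (hd z hz v (le_of_add_eq_right huv))]
  · rw [chi_neg hz]
    by_cases hD : z ∈ (sumset Pᶜ)ᶜ
    · rw [chi_pos hD]
      by_cases hu : u ∈ P
      · rw [chi_pos hu]; omega
      · by_cases hv : v ∈ P
        · rw [chi_pos hv]; omega
        · exact absurd (⟨u, hu, v, hv, huv.symm⟩ : z ∈ sumset Pᶜ) hD
    · rw [chi_neg hD]; omega

lemma conv_sum_le {e : ℕ} {ι : Type*} [DecidableEq ι] (s : Finset ι) (f : ι → Pt e → ℕ) (z : Pt e) :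
    ∑ i ∈ s, conv (f i) z ≤ conv (fun w => ∑ i ∈ s, f i w) z := by
  induction s using Finset.induction with
  | empty => simp
  | insert _ _ hx ih =>
    rename_i a s
    rw [Finset.sum_insert hx]
    refine le_trans (Nat.add_le_add_left ih _) ?_
    refine le_trans (conv_superadd _ _ z) (le_of_eq ?_)
    congr 1; funext w; rw [Finset.sum_insert hx]

lemma sum_chi {e : ℕ} {P : Set (Pt e)} (F : Finset (Pt e)) (hPF : ∀ z ∈ P, z ∈ F) :
    ∑ z ∈ F, chi P z = P.ncard := by
  classical
  have hfin : P.Finite := Set.Finite.subset F.finite_toSet hPF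
  have : ∑ z ∈ F, chi P z = ∑ z ∈ F, (if z ∈ P then 1 else 0) := by
    refine Finset.sum_congr rfl (fun z _ => ?_); by_cases h : z ∈ P
    · rw [chi_pos h, if_pos h]
    · rw [chi_neg h, if_neg h]
  rw [this, ← Finset.card_filter]
  rw [← Set.ncard_coe_finset]
  congr 1
  ext z
  simp only [Finset.coe_filter, Set.mem_setOf_eq]
  exact ⟨fun h => h.2, fun h => ⟨hPF z h, h⟩⟩


lemma cons_le_cons {e : ℕ} {a b : ℕ} {u v : Pt e} (h : a ≤ b) (h' : u ≤ v) :
    (Fin.cons a u : Pt (e+1)) ≤ Fin.cons b v := by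
  intro i
  refine Fin.cases ?_ ?_ i
  · simpa using h
  · intro j; simpa using h' j

lemma cons_add {e : ℕ} (a b : ℕ) (u v : Pt e) :
    Fin.cons a u + Fin.cons b v = (Fin.cons (a + b) (u + v) : Pt (e+1)) := by
  funext i
  refine Fin.cases ?_ ?_ i <;> simp

lemma tail_add {e : ℕ} (x y : Pt (e+1)) : Fin.tail (x + y) = Fin.tail x + Fin.tail y := rfl

lemma ug_card {e : ℕ} (h : Pt e → ℕ) (F : Finset (Pt e)) (hF : ∀ z, h z ≠ 0 → z ∈ F) :
    ∃ G : Finset (Pt (e+1)), {x : Pt (e+1) | x 0 < h (Fin.tail x)} = ↑G ∧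
      G.card = ∑ z ∈ F, h z := by
  refine ⟨F.biUnion (fun z => (Finset.range (h z)).image (fun t => Fin.cons t z)), ?_, ?_⟩
  · ext x
    simp only [Set.mem_setOf_eq, coe_biUnion, coe_image, coe_range, Set.mem_iUnion,
      Set.mem_image, Set.mem_Iio, mem_coe]
    constructor
    · intro hx
      refine ⟨Fin.tail x, hF _ (by omega), x 0, hx, ?_⟩
      exact Fin.cons_self_tail x
    · rintro ⟨z, hz, t, ht, rfl⟩
      simpa using ht
  · rw [Finset.card_biUnion]
    · refine Finset.sum_congr rfl (fun z _ => ?_)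
      rw [Finset.card_image_of_injective _ (fun s t hst => ?_), Finset.card_range]
      have := congrArg (fun f : Pt (e+1) => f 0) hst
      simpa using this
    · intro x _ y _ hxy
      rw [Function.onFun, Finset.disjoint_left]
      rintro p hp hq
      simp only [Finset.mem_image, Finset.mem_range] at hp hq
      obtain ⟨s, _, rfl⟩ := hp
      obtain ⟨t, _, h2⟩ := hq
      exact hxy (by rw [← Fin.tail_cons (α := fun _ => ℕ) t y, h2, Fin.tail_cons])

/-- point supported at one coordinate -/
def single {e : ℕ} (j : Fin e) (t : ℕ) : Pt e := fun i => if i = j then t else 0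

lemma single_apply_self {e : ℕ} (j : Fin e) (t : ℕ) : single j t j = t := by simp [single]
lemma single_apply_ne {e : ℕ} {j i : Fin e} (h : i ≠ j) (t : ℕ) : single j t i = by
  exact 0 := by simp [single, h]

lemma split_single {e : ℕ} {j : Fin e} {t : ℕ} {u v : Pt e} (h : u + v = single j t) :
    (∀ i, i ≠ j → u i = 0 ∧ v i = 0) ∧ u j + v j = t := by
  constructor
  · intro i hi
    have := congrFun h i
    simp only [Pi.add_apply, single, if_neg hi] at this
    omega
  · have := congrFun h j
    simpa [single] using this

lemma single_add_single {e : ℕ} (j : Fin e) (s t : ℕ) :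
    single j s + single j t = single j (s + t) := by
  funext i; by_cases hi : i = j <;> simp [single, hi]


def BoxForm {e : ℕ} (m : Pt e → ℕ) : Prop :=
  ∃ K : ℕ, ∃ b : Pt e, (∀ i, 0 < b i) ∧ ∀ z, m z = if (∀ i, z i < b i) then K else 0

theorem FUN {e : ℕ} (hSET : SETp e) (m : Pt e → ℕ)
    (hdec : ∀ z z' : Pt e, z ≤ z' → m z' ≤ m z)
    (F : Finset (Pt e)) (hFm : ∀ z, m z ≠ 0 → z ∈ F) (hFc : ∀ z, conv m z ≠ 0 → z ∈ F) :
    (e+2) * ∑ z ∈ F, m z ≤ ∑ z ∈ F, conv m z ∧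
    ((e+2) * ∑ z ∈ F, m z = ∑ z ∈ F, conv m z ↔ BoxForm m) := by
  classical
  set K := m 0 with hKdef
  have hle : ∀ z, m z ≤ K := fun z => hdec 0 z (fun i => Nat.zero_le _)
  set P : ℕ → Set (Pt e) := fun k => {z | k ≤ m z} with hPdef
  have hPdown : ∀ k, Down (P k) := fun k p hp q hq => le_trans hp (hdec q p hq)
  have hP0 : ∀ k, k ≤ K → (0 : Pt e) ∈ P k := fun k hk => hk
  have hPF : ∀ k, 1 ≤ k → ∀ z ∈ P k, z ∈ F := by
    intro k hk z hz
    exact hFm z (by have : k ≤ m z := hz; omega)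
  have hdecomp : ∀ z, m z = ∑ k ∈ Icc 1 K, chi (P k) z := by
    intro z
    have h1 : ∑ k ∈ Icc 1 K, chi (P k) z = ∑ k ∈ Icc 1 K, (if k ≤ m z then 1 else 0) := by
      refine Finset.sum_congr rfl (fun k _ => ?_)
      by_cases h : k ≤ m z
      · rw [chi_pos h, if_pos h]
      · rw [chi_neg h, if_neg h]
    rw [h1, ← Finset.card_filter]
    have h2 : (Icc 1 K).filter (fun k => k ≤ m z) = Icc 1 (m z) := by
      ext k
      simp only [Finset.mem_filter, Finset.mem_Icc]
      have := hle z
      omega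
    rw [h2, Nat.card_Icc]
    omega
  -- SET applied to each level
  have hA : ∀ k, 1 ≤ k → k ≤ K →
      ((sumset (P k)ᶜ)ᶜ).Finite ∧ (e+1) * (P k).ncard ≤ ((sumset (P k)ᶜ)ᶜ).ncard ∧
      ((e+1) * (P k).ncard = ((sumset (P k)ᶜ)ᶜ).ncard ↔ CI (P k)ᶜ) := by
    intro k hk1 hk2
    have h := hSET (P k)ᶜ (fun a ha b hb hbP => ha (hPdown k b hbP a hb))
      (by rw [compl_compl]
          exact Set.Finite.subset F.finite_toSet (hPF k hk1))
      (fun h0 => h0 (hP0 k hk2))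
    rwa [compl_compl] at h
  have hchi_le_m : ∀ k, 1 ≤ k → ∀ z, chi (P k) z ≤ m z := by
    intro k hk z
    by_cases h : z ∈ P k
    · rw [chi_pos h]; have : k ≤ m z := h; omega
    · rw [chi_neg h]; omega
  have hconvchi_le : ∀ k, 1 ≤ k → ∀ z, conv (chi (P k)) z ≤ conv m z :=
    fun k hk => conv_mono (hchi_le_m k hk)
  have hDF : ∀ k, 1 ≤ k → k ≤ K → ∀ z ∈ (sumset (P k)ᶜ)ᶜ, z ∈ F := by
    intro k hk1 hk2 z hz
    refine hFc z ?_
    have h1 := hconvchi_le k hk1 z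
    rw [conv_chi (hPdown k) (hP0 k hk2)] at h1
    rw [chi_pos hz] at h1
    omega
  have hsum_convchi : ∀ k, 1 ≤ k → k ≤ K →
      ∑ z ∈ F, conv (chi (P k)) z = (P k).ncard + ((sumset (P k)ᶜ)ᶜ).ncard := by
    intro k hk1 hk2
    have : ∀ z ∈ F, conv (chi (P k)) z = chi (P k) z + chi ((sumset (P k)ᶜ)ᶜ) z :=
      fun z _ => conv_chi (hPdown k) (hP0 k hk2) z
    rw [Finset.sum_congr rfl this, Finset.sum_add_distrib,
      sum_chi F (hPF k hk1), sum_chi F (hDF k hk1 hk2)]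
  have hS1 : ∑ z ∈ F, m z = ∑ k ∈ Icc 1 K, (P k).ncard := by
    rw [Finset.sum_congr rfl (fun z _ => hdecomp z), Finset.sum_comm]
    exact Finset.sum_congr rfl (fun k hk => sum_chi F (hPF k (Finset.mem_Icc.mp hk).1))
  have hmid : ∀ z, ∑ k ∈ Icc 1 K, conv (chi (P k)) z ≤ conv m z := by
    intro z
    refine le_trans (conv_sum_le _ _ z) (le_of_eq ?_)
    congr 1
    funext w
    exact (hdecomp w).symm
  have hchain1 : ∑ k ∈ Icc 1 K, ((P k).ncard + ((sumset (P k)ᶜ)ᶜ).ncard) ≤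
      ∑ z ∈ F, conv m z := by
    calc ∑ k ∈ Icc 1 K, ((P k).ncard + ((sumset (P k)ᶜ)ᶜ).ncard)
        = ∑ k ∈ Icc 1 K, ∑ z ∈ F, conv (chi (P k)) z := by
          refine Finset.sum_congr rfl (fun k hk => ?_)
          obtain ⟨h1, h2⟩ := Finset.mem_Icc.mp hk
          exact (hsum_convchi k h1 h2).symm
      _ = ∑ z ∈ F, ∑ k ∈ Icc 1 K, conv (chi (P k)) z := Finset.sum_comm
      _ ≤ ∑ z ∈ F, conv m z := Finset.sum_le_sum (fun z _ => hmid z)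
  have hlevel_le : ∀ k ∈ Icc 1 K, (P k).ncard + (e+1) * (P k).ncard ≤
      (P k).ncard + ((sumset (P k)ᶜ)ᶜ).ncard := by
    intro k hk
    obtain ⟨h1, h2⟩ := Finset.mem_Icc.mp hk
    exact Nat.add_le_add_left ((hA k h1 h2).2.1) _
  have hineq : (e+2) * ∑ z ∈ F, m z ≤ ∑ z ∈ F, conv m z := by
    calc (e+2) * ∑ z ∈ F, m z = ∑ k ∈ Icc 1 K, ((P k).ncard + (e+1) * (P k).ncard) := by
          rw [hS1, Finset.mul_sum]
          exact Finset.sum_congr rfl (fun k _ => by ring)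
      _ ≤ ∑ k ∈ Icc 1 K, ((P k).ncard + ((sumset (P k)ᶜ)ᶜ).ncard) :=
          Finset.sum_le_sum hlevel_le
      _ ≤ ∑ z ∈ F, conv m z := hchain1
  refine ⟨hineq, ?_, ?_⟩
  · -- equality → BoxForm
    intro heq
    by_cases hK0 : K = 0
    · refine ⟨0, fun _ => 1, fun _ => Nat.one_pos, fun z => ?_⟩
      have h2 : m z = 0 := le_antisymm (hK0 ▸ hle z) (Nat.zero_le _)
      rw [h2]
      split <;> rfl
    -- the two chained inequalities are equalities
    have hmidsum : ∑ z ∈ F, ∑ k ∈ Icc 1 K, conv (chi (P k)) z = ∑ z ∈ F, conv m z := by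
      have hle1 : (e+2) * ∑ z ∈ F, m z ≤
          ∑ k ∈ Icc 1 K, ((P k).ncard + ((sumset (P k)ᶜ)ᶜ).ncard) := by
        calc (e+2) * ∑ z ∈ F, m z
            = ∑ k ∈ Icc 1 K, ((P k).ncard + (e+1) * (P k).ncard) := by
              rw [hS1, Finset.mul_sum]
              exact Finset.sum_congr rfl (fun k _ => by ring)
          _ ≤ _ := Finset.sum_le_sum hlevel_le
      have hle2 : ∑ k ∈ Icc 1 K, ((P k).ncard + ((sumset (P k)ᶜ)ᶜ).ncard) =
          ∑ z ∈ F, ∑ k ∈ Icc 1 K, conv (chi (P k)) z := by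
        rw [← Finset.sum_comm]
        refine Finset.sum_congr rfl (fun k hk => ?_)
        obtain ⟨h1, h2⟩ := Finset.mem_Icc.mp hk
        exact (hsum_convchi k h1 h2).symm
      have hle3 := Finset.sum_le_sum (fun z (_ : z ∈ F) => hmid z)
      omega
    have hptwF : ∀ z ∈ F, ∑ k ∈ Icc 1 K, conv (chi (P k)) z = conv m z := by
      have := (Finset.sum_eq_sum_iff_of_le (fun z (_ : z ∈ F) => hmid z)).mp hmidsum
      exact fun z hz => this z hz
    have hptw : ∀ z, ∑ k ∈ Icc 1 K, conv (chi (P k)) z = conv m z := by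
      intro z
      by_cases hz : z ∈ F
      · exact hptwF z hz
      · have h0 : conv m z = 0 := by
          by_contra h
          exact hz (hFc z h)
        have := hmid z
        omega
    have hleveq : ∀ k, 1 ≤ k → k ≤ K →
        (e+1) * (P k).ncard = ((sumset (P k)ᶜ)ᶜ).ncard := by
      have hsum2 : ∑ k ∈ Icc 1 K, ((P k).ncard + (e+1) * (P k).ncard) =
          ∑ k ∈ Icc 1 K, ((P k).ncard + ((sumset (P k)ᶜ)ᶜ).ncard) := by
        have hl : ∑ k ∈ Icc 1 K, ((P k).ncard + (e+1) * (P k).ncard)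
            = (e+2) * ∑ z ∈ F, m z := by
          rw [hS1, Finset.mul_sum]
          exact (Finset.sum_congr rfl (fun k _ => by ring)).symm
        have hr : ∑ k ∈ Icc 1 K, ((P k).ncard + ((sumset (P k)ᶜ)ᶜ).ncard)
            = ∑ z ∈ F, conv m z := by
          rw [← hmidsum, ← Finset.sum_comm]
          refine Finset.sum_congr rfl (fun k hk => ?_)
          obtain ⟨h1, h2⟩ := Finset.mem_Icc.mp hk
          exact (hsum_convchi k h1 h2).symm
        omega
      intro k hk1 hk2
      have := (Finset.sum_eq_sum_iff_of_le hlevel_le).mp hsum2 k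
        (Finset.mem_Icc.mpr ⟨hk1, hk2⟩)
      omega
    -- each level is a box
    have hbox : ∀ k, 1 ≤ k → k ≤ K →
        ∃ b : Pt e, (∀ i, 0 < b i) ∧ P k = {z | ∀ i, z i < b i} := by
      intro k hk1 hk2
      obtain ⟨a, hapos, haset⟩ := (hA k hk1 hk2).2.2.mp (hleveq k hk1 hk2)
      refine ⟨a, hapos, ?_⟩
      rw [← compl_compl (P k), haset]
      ext z
      simp only [Set.mem_compl_iff, Set.mem_setOf_eq]
      push_neg
      rfl
    -- all levels are equal
    have hadjall : ∀ k, 1 ≤ k → k < K → P k = P (k+1) := by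
      by_contra hcon
      push_neg at hcon
      obtain ⟨k, hk1, hkK, hne⟩ := hcon
      obtain ⟨b, hbpos, hPb⟩ := hbox k hk1 (le_of_lt hkK)
      obtain ⟨b', hb'pos, hPb'⟩ := hbox (k+1) (by omega) hkK
      have hb'b : ∀ i, b' i ≤ b i := by
        intro i
        have hmem : single i (b' i - 1) ∈ P (k+1) := by
          rw [hPb']
          intro l
          by_cases hl : l = i
          · subst hl; rw [single_apply_self]; have := hb'pos l; omega
          · rw [single_apply_ne hl]; exact hb'pos l
        have hmem2 : single i (b' i - 1) ∈ P k := by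
          have : (k:ℕ) + 1 ≤ m (single i (b' i - 1)) := hmem
          show (k:ℕ) ≤ m (single i (b' i - 1))
          omega
        rw [hPb] at hmem2
        have := hmem2 i
        rw [single_apply_self] at this
        have := hb'pos i
        omega
      have hj : ∃ j, b' j < b j := by
        by_contra hj
        push_neg at hj
        have : b' = b := funext (fun i => le_antisymm (hb'b i) (hj i))
        exact hne (by rw [hPb, hPb', this])
      obtain ⟨j, hjlt⟩ := hj
      set t : ℕ := b j + b' j - 1 with htdef
      set zs : Pt e := single j t with hzsdef
      -- every split of zs is strictly bigger than the claimed value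
      have key : ∀ u v : Pt e, u + v = zs →
          (∑ k' ∈ Icc 1 K, (chi (P k') zs + chi ((sumset (P k')ᶜ)ᶜ) zs)) + 1 ≤ m u + m v := by
        intro u v huv
        obtain ⟨hzero, hsumj⟩ := split_single huv
        rw [hdecomp u, hdecomp v, ← Finset.sum_add_distrib]
        have hstrict : ∃ k' ∈ Icc 1 K,
            (chi (P k') zs + chi ((sumset (P k')ᶜ)ᶜ) zs) < chi (P k') u + chi (P k') v := by
          by_cases hcase : u j < b' j ∨ v j < b' j
          · refine ⟨k+1, Finset.mem_Icc.mpr ⟨by omega, hkK⟩, ?_⟩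
            have hz1 : zs ∉ P (k+1) := by
              rw [hPb']
              intro hall
              have := hall j
              rw [hzsdef, single_apply_self] at this
              have := hbpos j
              omega
            have hz2 : zs ∉ (sumset (P (k+1))ᶜ)ᶜ := by
              intro hmem
              refine hmem ⟨single j (b' j), ?_, single j (b j - 1), ?_, ?_⟩
              · rw [Set.mem_compl_iff, hPb']
                intro hall
                have := hall j
                rw [single_apply_self] at this
                omega
              · rw [Set.mem_compl_iff, hPb']
                intro hall
                have := hall j
                rw [single_apply_self] at this
                omega
              · rw [single_add_single, hzsdef, htdef]
                have h5 := hbpos j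
                have h6 : b' j + (b j - 1) = b j + b' j - 1 := by omega
                rw [h6]
            rw [chi_neg hz1, chi_neg hz2]
            have hone : chi (P (k+1)) u = 1 ∨ chi (P (k+1)) v = 1 := by
              rcases hcase with hc | hc
              · left
                refine chi_pos ?_
                rw [hPb']
                intro l
                by_cases hl : l = j
                · rw [hl]; exact hc
                · have := (hzero l hl).1; rw [this]; exact hb'pos l
              · right
                refine chi_pos ?_
                rw [hPb']
                intro l
                by_cases hl : l = j
                · rw [hl]; exact hc
                · have := (hzero l hl).2; rw [this]; exact hb'pos l
            rcases hone with h | h <;> rw [h] <;> omega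
          · push_neg at hcase
            obtain ⟨hu, hv⟩ := hcase
            refine ⟨k, Finset.mem_Icc.mpr ⟨hk1, le_of_lt hkK⟩, ?_⟩
            have hz1 : zs ∉ P k := by
              rw [hPb]
              intro hall
              have := hall j
              rw [hzsdef, single_apply_self] at this
              have := hb'pos j
              omega
            have hcu : chi (P k) u = 1 := by
              refine chi_pos ?_
              rw [hPb]
              intro l
              by_cases hl : l = j
              · rw [hl]
                have := hb'pos j
                omega
              · have := (hzero l hl).1; rw [this]; exact hbpos l
            have hcv : chi (P k) v = 1 := by
              refine chi_pos ?_
              rw [hPb]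
              intro l
              by_cases hl : l = j
              · rw [hl]
                have := hb'pos j
                omega
              · have := (hzero l hl).2; rw [this]; exact hbpos l
            rw [chi_neg hz1, hcu, hcv]
            have := chi_le_one ((sumset (P k)ᶜ)ᶜ) zs
            omega
        have hles : ∀ k' ∈ Icc 1 K,
            (chi (P k') zs + chi ((sumset (P k')ᶜ)ᶜ) zs) ≤ chi (P k') u + chi (P k') v :=
          fun k' _ => chi_split_le (hPdown k') huv
        have := Finset.sum_lt_sum hles hstrict
        omega
      have hgt := le_conv (m := m) (z := zs) key
      have hcontr : ∑ k' ∈ Icc 1 K, (chi (P k') zs + chi ((sumset (P k')ᶜ)ᶜ) zs) =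
          conv m zs := by
        rw [← hptw zs]
        refine Finset.sum_congr rfl (fun k' hk' => ?_)
        obtain ⟨h1, h2⟩ := Finset.mem_Icc.mp hk'
        exact (conv_chi (hPdown k') (hP0 k' h2) zs).symm
      omega
    -- hence all levels equal P 1
    have hall1 : ∀ k, 1 ≤ k → k ≤ K → P k = P 1 := by
      have haux : ∀ n, 1 + n ≤ K → P (1 + n) = P 1 := by
        intro n
        induction n with
        | zero => intro _; rfl
        | succ n ih =>
          intro hn
          have h1 : P (1 + n) = P 1 := ih (by omega)
          have h2 : P (1 + n) = P (1 + n + 1) := hadjall (1 + n) (by omega) (by omega)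
          rw [show 1 + (n+1) = 1 + n + 1 by omega, ← h2, h1]
      intro k hk1 hk2
      have := haux (k - 1) (by omega)
      rwa [show 1 + (k-1) = k by omega] at this
    obtain ⟨b1, hb1pos, hPb1⟩ := hbox 1 le_rfl (by omega)
    refine ⟨K, b1, hb1pos, fun z => ?_⟩
    have : m z = ∑ k ∈ Icc 1 K, chi (P 1) z := by
      rw [hdecomp z]
      refine Finset.sum_congr rfl (fun k hk => ?_)
      obtain ⟨h1, h2⟩ := Finset.mem_Icc.mp hk
      rw [hall1 k h1 h2]
    rw [this, Finset.sum_const, Nat.card_Icc, smul_eq_mul]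
    by_cases hz : ∀ i, z i < b1 i
    · rw [if_pos hz, chi_pos (show z ∈ P 1 by rw [hPb1]; exact hz)]
      omega
    · rw [if_neg hz, chi_neg (show z ∉ P 1 by rw [hPb1]; exact hz)]
      omega
  · -- BoxForm → equality
    rintro ⟨K', b, hbpos, hbm⟩
    by_cases hK' : K' = 0
    · subst hK'
      have hm0 : ∀ z, m z = 0 := by intro z; rw [hbm z]; split <;> rfl
      have hc0 : ∀ z, conv m z = 0 := by
        intro z
        have := conv_le m (add_zero z)
        rw [hm0 z, hm0 0] at this
        omega
      rw [Finset.sum_congr rfl (fun z _ => hm0 z), Finset.sum_congr rfl (fun z _ => hc0 z)]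
      simp
    · set Pb : Set (Pt e) := {z | ∀ i, z i < b i} with hPbdef
      have hmKchi : ∀ z, m z = K' * chi Pb z := by
        intro z
        rw [hbm z]
        by_cases h : ∀ i, z i < b i
        · rw [if_pos h, chi_pos (show z ∈ Pb from h)]; ring
        · rw [if_neg h, chi_neg (show z ∉ Pb from h)]; ring
      have hPbF : ∀ z ∈ Pb, z ∈ F := by
        intro z hz
        refine hFm z ?_
        rw [hmKchi z, chi_pos hz]
        omega
      have hPbdown : Down Pb := by
        intro p hp q hq i
        exact lt_of_le_of_lt (hq i) (hp i)
      have hPb0 : (0 : Pt e) ∈ Pb := fun i => hbpos i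
      have hset := hSET Pbᶜ (fun a ha w hw hwP => ha (hPbdown w hwP a hw))
        (by rw [compl_compl]; exact Set.Finite.subset F.finite_toSet hPbF)
        (fun h0 => h0 hPb0)
      rw [compl_compl] at hset
      have hCI : CI Pbᶜ := by
        refine ⟨b, hbpos, ?_⟩
        ext x
        simp only [Set.mem_compl_iff, hPbdef, Set.mem_setOf_eq]
        push_neg
        rfl
      have hDeq : (e+1) * Pb.ncard = ((sumset Pbᶜ)ᶜ).ncard := hset.2.2.mpr hCI
      have hconv_eq : ∀ z, conv m z = K' * (chi Pb z + chi ((sumset Pbᶜ)ᶜ) z) := by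
        intro z
        have h1 : conv m z = conv (fun w => K' * chi Pb w) z := by
          congr 1; funext w; exact hmKchi w
        rw [h1, conv_mul, conv_chi hPbdown hPb0]
      have hDbF : ∀ z ∈ (sumset Pbᶜ)ᶜ, z ∈ F := by
        intro z hz
        refine hFc z ?_
        rw [hconv_eq z, chi_pos hz]
        have : 1 ≤ K' := Nat.one_le_iff_ne_zero.mpr hK'
        nlinarith [chi_le_one Pb z]
      have hsm : ∑ z ∈ F, m z = K' * Pb.ncard := by
        rw [Finset.sum_congr rfl (fun z _ => hmKchi z), ← Finset.mul_sum, sum_chi F hPbF]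
      have hsc : ∑ z ∈ F, conv m z = K' * (Pb.ncard + ((sumset Pbᶜ)ᶜ).ncard) := by
        rw [Finset.sum_congr rfl (fun z _ => hconv_eq z), ← Finset.mul_sum,
          Finset.sum_add_distrib, sum_chi F hPbF, sum_chi F hDbF]
      rw [hsm, hsc, ← hDeq]
      ring

lemma SET_zero : SETp 0 := by
  intro A hup hfin h0
  have hA : A = ∅ := by
    ext x
    have : x = 0 := funext (fun i => i.elim0)
    simp only [Set.mem_empty_iff_false, iff_false]
    rw [this]
    exact h0
  subst hA
  have hsum : sumset (∅ : Set (Pt 0)) = ∅ := by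
    ext x
    simp [sumset]
  rw [hsum]
  have huniv : ∀ (s : Set (Pt 0)), (∅ : Set (Pt 0))ᶜ = Set.univ := fun _ => by simp
  rw [Set.compl_empty]
  have h1 : (Set.univ : Set (Pt 0)).ncard = 1 := by
    rw [Set.ncard_univ]
    exact Nat.card_unique
  rw [h1]
  refine ⟨Set.finite_univ, by omega, ?_⟩
  constructor
  · intro _
    refine ⟨fun i => i.elim0, fun i => i.elim0, ?_⟩
    ext x
    simp only [Set.mem_empty_iff_false, Set.mem_setOf_eq, false_iff]
    rintro ⟨i, _⟩
    exact i.elim0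
  · intro _
    omega

lemma cons_zero_zero {e : ℕ} : (Fin.cons 0 0 : Pt (e+1)) = 0 := by
  funext i
  refine Fin.cases ?_ ?_ i <;> simp

lemma SET_step {e : ℕ} (hSET : SETp e) : SETp (e+1) := by
  intro A hup hfin h0
  classical
  -- the height function
  set m : Pt e → ℕ := fun z => sInf {t | Fin.cons t z ∈ A} with hmdef
  have hne : ∀ z : Pt e, {t | Fin.cons t z ∈ A}.Nonempty := by
    intro z
    by_contra hcon
    rw [Set.not_nonempty_iff_eq_empty] at hcon
    have hinj : Function.Injective (fun t => (Fin.cons t z : Pt (e+1))) := by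
      intro s t hst
      have := congrFun hst 0
      simpa using this
    have hsub : Set.range (fun t => (Fin.cons t z : Pt (e+1))) ⊆ Aᶜ := by
      rintro x ⟨t, rfl⟩
      intro hx
      have : t ∈ {t | Fin.cons t z ∈ A} := hx
      rw [hcon] at this
      exact this
    exact Set.infinite_range_of_injective hinj (hfin.subset hsub)
  have hmem : ∀ z : Pt e, Fin.cons (m z) z ∈ A := fun z => Nat.sInf_mem (hne z)
  have hconsA : ∀ (t : ℕ) (z : Pt e), Fin.cons t z ∈ A ↔ m z ≤ t := by
    intro t z
    constructor
    · intro h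
      exact Nat.sInf_le h
    · intro h
      exact hup _ (hmem z) _ (cons_le_cons h le_rfl)
  have hxA : ∀ x : Pt (e+1), x ∈ A ↔ m (Fin.tail x) ≤ x 0 := by
    intro x
    rw [← hconsA (x 0) (Fin.tail x), Fin.cons_self_tail]
  have hdec : ∀ z z' : Pt e, z ≤ z' → m z' ≤ m z := by
    intro z z' hzz
    rw [← hconsA]
    exact hup _ (hmem z) _ (cons_le_cons le_rfl hzz)
  -- support bound
  have hsuppfin : {z : Pt e | m z ≠ 0}.Finite := by
    have : {z : Pt e | m z ≠ 0} = (fun z => (Fin.cons 0 z : Pt (e+1))) ⁻¹' Aᶜ := by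
      ext z
      simp only [Set.mem_setOf_eq, Set.mem_preimage, Set.mem_compl_iff]
      rw [hconsA]
      omega
    rw [this]
    refine Set.Finite.preimage ?_ hfin
    intro s _ t _ hst
    have := congrFun hst
    funext i
    simpa using this i.succ
  set N : ℕ := (hsuppfin.toFinset.sup (fun z => Finset.univ.sup z)) + 1 with hNdef
  have hNbound : ∀ z : Pt e, m z ≠ 0 → ∀ i, z i < N := by
    intro z hz i
    have h1 : z ∈ hsuppfin.toFinset := by rwa [Set.Finite.mem_toFinset]
    have h2 : z i ≤ Finset.univ.sup z := Finset.le_sup (Finset.mem_univ i)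
    have h3 : Finset.univ.sup z ≤ hsuppfin.toFinset.sup (fun z => Finset.univ.sup z) :=
      Finset.le_sup h1
    omega
  set F : Finset (Pt e) := Fintype.piFinset (fun _ => Finset.range (2 * N)) with hFdef
  have hFm : ∀ z, m z ≠ 0 → z ∈ F := by
    intro z hz
    rw [hFdef, Fintype.mem_piFinset]
    intro i
    rw [Finset.mem_range]
    have := hNbound z hz i
    omega
  have hFc : ∀ z, conv m z ≠ 0 → z ∈ F := by
    intro z
    contrapose!
    intro hz
    rw [hFdef, Fintype.mem_piFinset] at hz
    push_neg at hz
    obtain ⟨j, hj⟩ := hz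
    rw [Finset.mem_range] at hj
    push_neg at hj
    set u : Pt e := fun i => if i = j then z j - z j / 2 else z i with hudef
    set v : Pt e := single j (z j / 2) with hvdef
    have huj : u j = z j - z j / 2 := by rw [hudef]; simp
    have hvj : v j = z j / 2 := by rw [hvdef]; exact single_apply_self j _
    have huv : u + v = z := by
      funext i
      simp only [Pi.add_apply, hudef, hvdef, single]
      by_cases hi : i = j
      · rw [if_pos hi, if_pos hi, hi]
        omega
      · rw [if_neg hi, if_neg hi]
        omega
    have hmu : m u = 0 := by
      by_contra h
      have := hNbound u h j
      rw [huj] at this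
      omega
    have hmv : m v = 0 := by
      by_contra h
      have := hNbound v h j
      rw [hvj] at this
      omega
    have := conv_le m huv
    omega
  -- counting
  have hAc : Aᶜ = {x : Pt (e+1) | x 0 < m (Fin.tail x)} := by
    ext x
    rw [Set.mem_compl_iff, hxA x]
    simp only [Set.mem_setOf_eq]
    omega
  obtain ⟨G1, hG1set, hG1card⟩ := ug_card m F hFm
  have hAcard : Aᶜ.ncard = ∑ z ∈ F, m z := by
    rw [hAc, hG1set, Set.ncard_coe_finset, hG1card]
  have hsumA : sumset A = {x : Pt (e+1) | conv m (Fin.tail x) ≤ x 0} := by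
    ext x
    constructor
    · rintro ⟨a, ha, a', ha', rfl⟩
      have h1 : m (Fin.tail a) ≤ a 0 := (hxA a).mp ha
      have h2 : m (Fin.tail a') ≤ a' 0 := (hxA a').mp ha'
      have h3 := conv_le m (u := Fin.tail a) (v := Fin.tail a') (z := Fin.tail (a + a')) rfl
      simp only [Set.mem_setOf_eq, Pi.add_apply]
      omega
    · intro hx
      simp only [Set.mem_setOf_eq] at hx
      obtain ⟨u, v, huv, hcv⟩ := exists_conv m (Fin.tail x)
      refine ⟨Fin.cons (m u) u, (hconsA _ _).mpr le_rfl,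
        Fin.cons (x 0 - m u) v, (hconsA _ _).mpr (by omega), ?_⟩
      rw [cons_add]
      have : m u + (x 0 - m u) = x 0 := by omega
      rw [this, huv, Fin.cons_self_tail]
  have hsumAc : (sumset A)ᶜ = {x : Pt (e+1) | x 0 < conv m (Fin.tail x)} := by
    rw [hsumA]
    ext x
    simp only [Set.mem_compl_iff, Set.mem_setOf_eq]
    omega
  obtain ⟨G2, hG2set, hG2card⟩ := ug_card (conv m) F hFc
  have hSfin : ((sumset A)ᶜ).Finite := by
    rw [hsumAc, hG2set]
    exact G2.finite_toSet
  have hScard : ((sumset A)ᶜ).ncard = ∑ z ∈ F, conv m z := by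
    rw [hsumAc, hG2set, Set.ncard_coe_finset, hG2card]
  obtain ⟨hFineq, hFiff⟩ := FUN hSET m hdec F hFm hFc
  have harith : e + 1 + 1 = e + 2 := rfl
  refine ⟨hSfin, ?_, ?_⟩
  · rw [hAcard, hScard, harith]
    exact hFineq
  · rw [hAcard, hScard, harith, hFiff]
    -- BoxForm m ↔ CI A
    constructor
    · rintro ⟨K, b, hbpos, hbm⟩
      have hK1 : 1 ≤ K := by
        have h1 : m 0 = K := by
          rw [hbm 0]
          simp only [Pi.zero_apply]
          rw [if_pos (fun i => hbpos i)]
        by_contra hcon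
        have h2 : m 0 = 0 := by omega
        have : (0 : Pt (e+1)) ∈ A := by
          rw [← cons_zero_zero, hconsA]
          have h3 : Fin.tail (0 : Pt (e+1)) = (0 : Pt e) := rfl
          omega
        exact h0 this
      refine ⟨Fin.cons K b, ?_, ?_⟩
      · intro i
        refine Fin.cases ?_ ?_ i
        · simpa using Nat.lt_of_lt_of_le Nat.zero_lt_one hK1
        · intro j; simpa using hbpos j
      · ext x
        rw [hxA x, hbm (Fin.tail x)]
        constructor
        · intro hx
          by_cases hb : ∀ i, Fin.tail x i < b i
          · rw [if_pos hb] at hx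
            exact ⟨0, by simpa using hx⟩
          · push_neg at hb
            obtain ⟨j, hj⟩ := hb
            exact ⟨j.succ, by simpa [Fin.tail] using hj⟩
        · rintro ⟨i, hi⟩
          refine Fin.cases (motive := fun i => (Fin.cons K b : Pt (e+1)) i ≤ x i → _) ?_ ?_ i hi
          · intro hK
            simp only [Fin.cons_zero] at hK
            split
            · exact hK
            · omega
          · intro j hj
            simp only [Fin.cons_succ] at hj
            rw [if_neg ?_]
            · omega
            · push_neg
              exact ⟨j, hj⟩
    · rintro ⟨a, hapos, hAeq⟩
      refine ⟨a 0, Fin.tail a, fun i => hapos i.succ, fun z => ?_⟩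
      have hmemiff : ∀ t : ℕ, (Fin.cons t z : Pt (e+1)) ∈ A ↔
          (a 0 ≤ t ∨ ∃ i : Fin e, Fin.tail a i ≤ z i) := by
        intro t
        rw [hAeq]
        simp only [Set.mem_setOf_eq]
        constructor
        · rintro ⟨i, hi⟩
          refine Fin.cases (motive := fun i => a i ≤ (Fin.cons t z : Pt (e+1)) i → _) ?_ ?_ i hi
          · intro h; left; simpa using h
          · intro j hj; right; exact ⟨j, by simpa [Fin.tail] using hj⟩
        · rintro (h | ⟨i, hi⟩)
          · exact ⟨0, by simpa using h⟩
          · exact ⟨i.succ, by simpa [Fin.tail] using hi⟩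
      by_cases hz : ∀ i, z i < Fin.tail a i
      · rw [if_pos hz]
        apply le_antisymm
        · apply Nat.sInf_le
          show (Fin.cons (a 0) z : Pt (e+1)) ∈ A
          rw [hmemiff]
          left; exact le_rfl
        · refine le_csInf (hne z) ?_
          intro t ht
          rw [Set.mem_setOf_eq, hmemiff] at ht
          rcases ht with h | ⟨i, hi⟩
          · exact h
          · exact absurd hi (by have := hz i; omega)
      · rw [if_neg hz]
        push_neg at hz
        obtain ⟨j, hj⟩ := hz
        have : (Fin.cons 0 z : Pt (e+1)) ∈ A := by
          rw [hmemiff]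
          right; exact ⟨j, hj⟩
        have h2 : m z ≤ 0 := Nat.sInf_le this
        omega

lemma SET_all : ∀ d, SETp d := by
  intro d
  induction d with
  | zero => exact SET_zero
  | succ e ih => exact SET_step ih
end Stmt17

/-- combinatorial form: let `A ⊆ ℕ^d` be upward closed with
finite complement `B` and `0 ∉ A` (so `A` is the exponent set of a proper
zero-dimensional monomial ideal `I`, with `|B| = dim_k(R/I)` and
`|A \ (A+A)| = dim_k(I/I²)`).  Then `d·|B| = |A \ (A + A)|` if and only if the
corresponding ideal is a complete intersection `⟨x_1^{a_1},…,x_d^{a_d}⟩`, i.e.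
`A = {x | ∃ i, a i ≤ x i}` for positive integers `a_1,…,a_d`. -/
theorem stmt17 {d : ℕ} (A : Set (Fin d → ℕ))
    (hup : ∀ a ∈ A, ∀ b, a ≤ b → b ∈ A) (hfin : Aᶜ.Finite) (h1 : 0 ∉ A) :
    d * Aᶜ.ncard = (A \ {x | ∃ a ∈ A, ∃ a' ∈ A, x = a + a'}).ncard ↔
    ∃ a : Fin d → ℕ, (∀ i, 0 < a i) ∧ A = {x | ∃ i, a i ≤ x i} := by
  obtain ⟨hfinS, hineq, hiff⟩ := Stmt17.SET_all d A hup hfin h1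
  have hsub : Stmt17.sumset A ⊆ A := by
    rintro x ⟨a, ha, a', ha', rfl⟩
    exact hup a ha (a + a') le_self_add
  have hsplit : (Stmt17.sumset A)ᶜ = Aᶜ ∪ (A \ Stmt17.sumset A) := by
    ext x
    by_cases hx : x ∈ A
    · simp only [Set.mem_compl_iff, Set.mem_union, Set.mem_diff, hx]
      tauto
    · simp only [Set.mem_compl_iff, Set.mem_union, Set.mem_diff, hx]
      constructor
      · intro _; tauto
      · intro _ hS; exact hx (hsub hS)
  have hdisj : Disjoint Aᶜ (A \ Stmt17.sumset A) := by
    rw [Set.disjoint_left]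
    rintro x hx ⟨hxA, _⟩
    exact hx hxA
  have hfinAS : (A \ Stmt17.sumset A).Finite := by
    refine hfinS.subset ?_
    rintro x ⟨hxA, hxS⟩
    exact hxS
  have hcard : ((Stmt17.sumset A)ᶜ).ncard = Aᶜ.ncard + (A \ Stmt17.sumset A).ncard := by
    rw [hsplit, Set.ncard_union_eq hdisj hfin hfinAS]
  have hSS : (A \ {x | ∃ a ∈ A, ∃ a' ∈ A, x = a + a'}) = A \ Stmt17.sumset A := rfl
  rw [hSS]
  set x := Aᶜ.ncard
  set y := (A \ Stmt17.sumset A).ncard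
  set u := d * x with hu
  have hdx : (d+1) * x = u + x := by rw [hu]; ring
  rw [hdx] at hineq hiff
  constructor
  · intro h
    exact hiff.mp (by omega)
  · intro h
    have := hiff.mpr h
    omega
end

section
/- Suppose I ⊆ R = k[x_1,...,x_d] is a zero-dimensional monomial ideal, a_i is the least integer with x_i^{a_i} ∈ I, J = ⟨x_1^{a_1},...,x_d^{a_d}⟩, and I² = I·J. Then dim_k(I/I²) - d·dim_k(R/I) = a_1·a_2···a_d - dim_k(R/I) = dim_k(R/J) - dim_k(R/I). -/
set_option maxHeartbeats 1000000

namespace Stmt19Aux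

open MvPolynomial
variable {k : Type*} [Field k] {d : ℕ}

noncomputable def boxF {b : Fin d → ℕ} (f : ∀ i, Fin (b i)) : Fin d →₀ ℕ :=
  Finsupp.equivFunOnFinite.symm fun i => (f i : ℕ)

lemma boxF_inj {b : Fin d → ℕ} : Function.Injective (boxF (b := b)) := by
  intro f g h
  funext i
  have hi : (boxF f) i = (boxF g) i := by rw [h]
  exact Fin.ext hi

lemma monomial_mem_of_le {K : Ideal (MvPolynomial (Fin d) k)} {b : Fin d → ℕ} (i : Fin d)
    (hb : X i ^ b i ∈ K) (m : Fin d →₀ ℕ) (hm : b i ≤ m i) (c : k) :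
    monomial m c ∈ K := by
  have : monomial m c = monomial (m - Finsupp.single i (b i)) c * (X i ^ b i) := by
    rw [X_pow_eq_monomial, monomial_mul, mul_one, tsub_add_cancel_of_le]
    exact Finsupp.single_le_iff.mpr hm
  rw [this]; exact Ideal.mul_mem_left _ _ hb

lemma box_span (K : Ideal (MvPolynomial (Fin d) k)) (b : Fin d → ℕ)
    (hb : ∀ i, X i ^ b i ∈ K) :
    Submodule.span k (Set.range fun f : ∀ i, Fin (b i) =>
      Ideal.Quotient.mk K (monomial (boxF f) (1 : k))) = ⊤ := by
  rw [eq_top_iff]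
  rintro x -
  obtain ⟨p, rfl⟩ := Ideal.Quotient.mk_surjective x
  rw [p.as_sum, map_sum]
  refine Submodule.sum_mem _ fun m hm => ?_
  by_cases hbox : ∀ i, m i < b i
  · have h1 : (Ideal.Quotient.mk K) (monomial m (p.coeff m)) =
        (p.coeff m) • (Ideal.Quotient.mk K) (monomial m (1 : k)) := by
      rw [← Ideal.Quotient.mkₐ_eq_mk k, ← map_smul, smul_monomial, smul_eq_mul, mul_one]
    rw [h1]
    refine Submodule.smul_mem _ _ (Submodule.subset_span ?_)
    refine ⟨fun i => ⟨m i, hbox i⟩, ?_⟩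
    have hbf : boxF (fun i => (⟨m i, hbox i⟩ : Fin (b i))) = m := Finsupp.ext fun i => rfl
    simp only [hbf]
  · push_neg at hbox
    obtain ⟨i, hi⟩ := hbox
    have : monomial m (p.coeff m) ∈ K := monomial_mem_of_le i (hb i) m hi _
    rw [Ideal.Quotient.eq_zero_iff_mem.mpr this]
    exact Submodule.zero_mem _

lemma fd_of_powers (K : Ideal (MvPolynomial (Fin d) k)) (b : Fin d → ℕ)
    (hb : ∀ i, X i ^ b i ∈ K) :
    FiniteDimensional k (MvPolynomial (Fin d) k ⧸ K) :=
  ⟨(box_span K b hb) ▸ Submodule.fg_span (Set.finite_range _)⟩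

lemma J_monomial_form (a : Fin d → ℕ) :
    Ideal.span (Set.range fun i => (X i : MvPolynomial (Fin d) k) ^ a i) =
      Ideal.span ((fun s => monomial s (1 : k)) ''
        Set.range (fun i => Finsupp.single i (a i))) := by
  congr 1
  rw [← Set.range_comp]
  apply congrArg
  funext i
  simp [Function.comp, X_pow_eq_monomial]

lemma finrank_quot_J (a : Fin d → ℕ) :
    Module.finrank k (MvPolynomial (Fin d) k ⧸
      Ideal.span (Set.range fun i => (X i : MvPolynomial (Fin d) k) ^ a i)) = ∏ i, a i := by
  classical
  set J := Ideal.span (Set.range fun i => (X i : MvPolynomial (Fin d) k) ^ a i) with hJ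
  have hpow : ∀ i, (X i : MvPolynomial (Fin d) k) ^ a i ∈ J :=
    fun i => Ideal.subset_span ⟨i, rfl⟩
  have hindep : LinearIndependent k (fun f : ∀ i, Fin (a i) =>
      Ideal.Quotient.mk J (monomial (boxF f) (1 : k))) := by
    rw [Fintype.linearIndependent_iff]
    intro g hg f0
    have hsum : (Ideal.Quotient.mk J) (∑ f : ∀ i, Fin (a i), monomial (boxF f) (g f)) = 0 := by
      rw [map_sum, ← hg]
      congr 1
      funext f
      rw [← Ideal.Quotient.mkₐ_eq_mk k, ← map_smul, smul_monomial, smul_eq_mul, mul_one]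
    set p := ∑ f : ∀ i, Fin (a i), monomial (boxF f) (g f) with hp
    have hmem : p ∈ J := Ideal.Quotient.eq_zero_iff_mem.mp hsum
    rw [hJ, J_monomial_form] at hmem
    rw [mem_ideal_span_monomial_image] at hmem
    by_contra hne
    have hcoeff : coeff (boxF f0) p = g f0 := by
      rw [hp, coeff_sum]
      rw [Finset.sum_congr rfl (fun f _ => coeff_monomial (boxF f0) (boxF f) (g f))]
      rw [Finset.sum_congr rfl (g := fun f => if f = f0 then g f else 0)
        (fun f _ => by simp only [boxF_inj.eq_iff])]
      simp
    have hsupp : boxF f0 ∈ p.support := by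
      rw [mem_support_iff, hcoeff]; exact hne
    obtain ⟨si, ⟨i, rfl⟩, hle⟩ := hmem _ hsupp
    have := Finsupp.single_le_iff.mp hle
    have h2 : (boxF f0) i = f0 i := rfl
    rw [h2] at this
    exact absurd this (not_le.mpr (f0 i).isLt)
  have hspan := box_span J a hpow
  let B : Module.Basis (∀ i, Fin (a i)) k (MvPolynomial (Fin d) k ⧸ J) :=
    Module.Basis.mk hindep (by rw [hspan])
  rw [Module.finrank_eq_card_basis B]
  simp [Fintype.card_pi]

/-- Syzygy lemma: any relation on the pure powers has coefficients in the
ideal they generate. -/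
lemma syzygy (a : Fin d → ℕ) (t : Fin d → MvPolynomial (Fin d) k)
    (h : ∑ i, t i * X i ^ a i = 0) (i : Fin d) :
    t i ∈ Ideal.span (Set.range fun j => (X j : MvPolynomial (Fin d) k) ^ a j) := by
  classical
  rw [J_monomial_form, mem_ideal_span_monomial_image]
  intro m hm
  by_contra hno
  push_neg at hno
  have hgood : ∀ j, j ≠ i → m j < a j := by
    intro j hj
    by_contra hle
    push_neg at hle
    exact absurd (Finsupp.single_le_iff.mpr hle) (hno _ ⟨j, rfl⟩)
  set μ : Fin d →₀ ℕ := m + Finsupp.single i (a i) with hμ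
  have hc : coeff μ (∑ j, t j * X j ^ a j) = 0 := by rw [h, coeff_zero]
  rw [coeff_sum] at hc
  have hterm : ∀ j, coeff μ (t j * X j ^ a j) =
      if j = i then coeff m (t i) else 0 := by
    intro j
    rw [X_pow_eq_monomial, coeff_mul_monomial']
    by_cases hji : j = i
    · subst hji
      rw [if_pos, if_pos rfl, add_tsub_cancel_right, mul_one]
      exact Finsupp.single_le_iff.mpr (by simp [hμ, Finsupp.single_apply])
    · rw [if_neg hji, if_neg]
      intro hle
      have := Finsupp.single_le_iff.mp hle
      have hμj : μ j = m j := by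
        simp [hμ, Finsupp.single_apply, Ne.symm hji]
      rw [hμj] at this
      exact absurd this (not_le.mpr (hgood j hji))
  rw [Finset.sum_congr rfl (fun j _ => hterm j)] at hc
  simp at hc
  exact (mem_support_iff.mp hm) hc

lemma mul_span_rep (I : Ideal (MvPolynomial (Fin d) k)) (a : Fin d → ℕ)
    {p : MvPolynomial (Fin d) k}
    (hp : p ∈ I * Ideal.span (Set.range fun j => (X j : MvPolynomial (Fin d) k) ^ a j)) :
    ∃ s : Fin d → MvPolynomial (Fin d) k, (∀ i, s i ∈ I) ∧ ∑ i, s i * X i ^ a i = p := by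
  refine Submodule.mul_induction_on hp ?_ ?_
  · intro x hx y hy
    rw [Ideal.span, Submodule.mem_span_range_iff_exists_fun] at hy
    obtain ⟨c, hc⟩ := hy
    refine ⟨fun i => x * c i, fun i => Ideal.mul_mem_right _ _ hx, ?_⟩
    rw [← hc, Finset.mul_sum]
    congr 1; funext i; rw [smul_eq_mul]; ring
  · rintro x y ⟨s, hs, rfl⟩ ⟨s', hs', rfl⟩
    exact ⟨fun i => s i + s' i, fun i => Ideal.add_mem _ (hs i) (hs' i),
      by rw [← Finset.sum_add_distrib]; congr 1; funext i; ring⟩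

lemma dim_J_mod_IJ (I : Ideal (MvPolynomial (Fin d) k)) (a : Fin d → ℕ)
    (haI : ∀ i, (X i : MvPolynomial (Fin d) k) ^ a i ∈ I)
    [hfd : FiniteDimensional k (MvPolynomial (Fin d) k ⧸ I)] :
    idealQuotDim k (Ideal.span (Set.range fun j => (X j : MvPolynomial (Fin d) k) ^ a j))
      (I * Ideal.span (Set.range fun j => (X j : MvPolynomial (Fin d) k) ^ a j)) =
      d * Module.finrank k (MvPolynomial (Fin d) k ⧸ I) := by
  classical
  set R := MvPolynomial (Fin d) k
  set J : Ideal R := Ideal.span (Set.range fun j => (X j : R) ^ a j) with hJdef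
  set B : Ideal R := I * J with hBdef
  have hfJ : ∀ i, (X i : R) ^ a i ∈ J := fun i => Ideal.subset_span ⟨i, rfl⟩
  set N : Submodule R ↥J := Submodule.comap J.subtype (B : Submodule R R) with hNdef
  let φ : (Fin d → R) →ₗ[R] ↥J :=
    { toFun := fun r => ⟨∑ i, r i * X i ^ a i,
        Ideal.sum_mem _ fun i _ => Ideal.mul_mem_left _ _ (hfJ i)⟩
      map_add' := by
        intro r s; ext
        simp [add_mul, Finset.sum_add_distrib]
      map_smul' := by
        intro c r; ext
        simp [Finset.mul_sum, mul_assoc]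
        rw [Finset.mul_sum] }
  let Φ : (Fin d → R) →ₗ[R] (↥J ⧸ N) := N.mkQ.comp φ
  have hsurj : Function.Surjective Φ := by
    intro z
    obtain ⟨⟨x, hx⟩, rfl⟩ := Submodule.Quotient.mk_surjective _ z
    rw [hJdef, Ideal.span, Submodule.mem_span_range_iff_exists_fun] at hx
    obtain ⟨c, hc⟩ := hx
    refine ⟨c, ?_⟩
    show Submodule.Quotient.mk (φ c) = _
    congr 1
    apply Subtype.ext
    show ∑ i, c i * X i ^ a i = x
    rw [← hc]
    exact Finset.sum_congr rfl fun i _ => (smul_eq_mul _ _).symm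
  have hker : LinearMap.ker Φ = Submodule.pi Set.univ (fun _ : Fin d => (I : Submodule R R)) := by
    ext r
    simp only [LinearMap.mem_ker, Submodule.mem_pi, Set.mem_univ, forall_true_left]
    constructor
    · intro hr
      have : φ r ∈ N := by
        rwa [LinearMap.comp_apply, Submodule.mkQ_apply, Submodule.Quotient.mk_eq_zero] at hr
      rw [hNdef, Submodule.mem_comap] at this
      have hmem : ∑ i, r i * X i ^ a i ∈ I * J := this
      obtain ⟨s, hs, hsum⟩ := mul_span_rep I a hmem
      intro i
      have hdiff : ∑ j, (r j - s j) * X j ^ a j = 0 := by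
        have : ∑ j, (r j - s j) * X j ^ a j
            = (∑ j, r j * X j ^ a j) - ∑ j, s j * X j ^ a j := by
          rw [← Finset.sum_sub_distrib]; congr 1; funext j; ring
        rw [this, hsum, sub_self]
      have hJmem := syzygy a (fun j => r j - s j) hdiff i
      have : r i - s i ∈ I := (Ideal.span_le.mpr (by
        rintro x ⟨j, rfl⟩; exact haI j)) hJmem
      have := I.add_mem this (hs i)
      simpa using this
    · intro hr
      show N.mkQ (φ r) = 0
      rw [Submodule.mkQ_apply, Submodule.Quotient.mk_eq_zero]
      rw [hNdef, Submodule.mem_comap]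
      show ∑ i, r i * X i ^ a i ∈ I * J
      exact Ideal.sum_mem _ fun i _ => Ideal.mul_mem_mul (hr i) (hfJ i)
  let e : (∀ _ : Fin d, R ⧸ (I : Submodule R R)) ≃ₗ[R] (↥J ⧸ N) :=
    ((Submodule.quotientPi _).symm.trans
      (Submodule.quotEquivOfEq _ _ hker.symm)).trans
      (Φ.quotKerEquivOfSurjective hsurj)
  have hfr : Module.finrank k (↥J ⧸ N) =
      Module.finrank k (∀ _ : Fin d, R ⧸ (I : Submodule R R)) :=
    (LinearEquiv.restrictScalars k e).symm.finrank_eq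
  have hid : idealQuotDim k J B = Module.finrank k (↥J ⧸ N) := by
    unfold idealQuotDim
    have hcomap : Submodule.comap (J.restrictScalars k).subtype (B.restrictScalars k)
        = N.restrictScalars k := rfl
    rw [hcomap]
    exact (Submodule.Quotient.restrictScalarsEquiv k N).finrank_eq
  rw [hid, hfr]
  rw [Module.finrank_pi_fintype k]
  simp [Finset.sum_const, mul_comm]
  exact Or.inl rfl

lemma quot_dim_add (k : Type*) [Field k] {R : Type*} [CommRing R] [Algebra k R]
    (A B : Ideal R) (hBA : B ≤ A)
    (hfd : FiniteDimensional k (R ⧸ B)) :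
    Module.finrank k (R ⧸ B) = idealQuotDim k A B + Module.finrank k (R ⧸ A) := by
  classical
  set A' := A.restrictScalars k with hA'
  set B' := B.restrictScalars k with hB'
  let eB : (R ⧸ B') ≃ₗ[k] (R ⧸ B) := Submodule.Quotient.restrictScalarsEquiv k B
  let eA : (R ⧸ A') ≃ₗ[k] (R ⧸ A) := Submodule.Quotient.restrictScalarsEquiv k A
  haveI : FiniteDimensional k (R ⧸ B') := Module.Finite.equiv eB.symm
  set N : Submodule k (R ⧸ B') := A'.map B'.mkQ with hN
  have e1 : (↥A' ⧸ Submodule.comap A'.subtype B') ≃ₗ[k] ↥N := by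
    have hker : LinearMap.ker (B'.mkQ ∘ₗ A'.subtype) = Submodule.comap A'.subtype B' := by
      rw [LinearMap.ker_comp, Submodule.ker_mkQ]
    have hrange : LinearMap.range (B'.mkQ ∘ₗ A'.subtype) = N := by
      rw [LinearMap.range_comp, Submodule.range_subtype]
    exact (Submodule.quotEquivOfEq _ _ hker.symm).trans
      ((LinearMap.quotKerEquivRange _).trans (LinearEquiv.ofEq _ _ hrange))
  have e2 : ((R ⧸ B') ⧸ N) ≃ₗ[k] R ⧸ A' :=
    Submodule.quotientQuotientEquivQuotient B' A' (fun x hx => hBA hx)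
  have hadd := Submodule.finrank_quotient_add_finrank N
  rw [eB.symm.finrank_eq, ← hadd, e2.finrank_eq, eA.finrank_eq]
  unfold idealQuotDim
  rw [e1.finrank_eq]
  ring

end Stmt19Aux

open Stmt19Aux in
/-- let `I ⊆ R = k[x_1,…,x_d]` be a zero-dimensional monomial
ideal, `a_i` the least integer with `x_i^{a_i} ∈ I`, `J = ⟨x_1^{a_1},…,x_d^{a_d}⟩`,
and suppose `I² = I·J`.  Then
`dim_k(I/I²) - d·dim_k(R/I) = a_1⋯a_d - dim_k(R/I) = dim_k(R/J) - dim_k(R/I)`. -/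
theorem stmt19 (k : Type*) [Field k] {d : ℕ}
    (I : Ideal (MvPolynomial (Fin d) k))
    (hmon : IsMonomialIdeal I) (hproper : I ≠ ⊤)
    (hfd : FiniteDimensional k (MvPolynomial (Fin d) k ⧸ I))
    (a : Fin d → ℕ)
    (ha : ∀ i, MvPolynomial.X i ^ a i ∈ I ∧ ∀ b < a i, MvPolynomial.X i ^ b ∉ I)
    (J : Ideal (MvPolynomial (Fin d) k))
    (hJ : J = Ideal.span (Set.range fun i => MvPolynomial.X i ^ a i))
    (hred : I ^ 2 = I * J) :
    (idealQuotDim k I (I ^ 2) : ℤ) -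
        d * Module.finrank k (MvPolynomial (Fin d) k ⧸ I) =
      (∏ i, a i : ℤ) - Module.finrank k (MvPolynomial (Fin d) k ⧸ I) ∧
    (∏ i, a i : ℤ) - Module.finrank k (MvPolynomial (Fin d) k ⧸ I) =
      (Module.finrank k (MvPolynomial (Fin d) k ⧸ J) : ℤ) -
        Module.finrank k (MvPolynomial (Fin d) k ⧸ I) := by
  classical
  subst hJ
  set R := MvPolynomial (Fin d) k
  set J : Ideal R := Ideal.span (Set.range fun i => MvPolynomial.X i ^ a i) with hJdef
  haveI hfdI := hfd
  have haI : ∀ i, (MvPolynomial.X i : R) ^ a i ∈ I := fun i => (ha i).1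
  have hJI : J ≤ I := Ideal.span_le.mpr (by rintro x ⟨i, rfl⟩; exact haI i)
  have hI2I : I ^ 2 ≤ I := Ideal.pow_le_self two_ne_zero
  have hI2J : I ^ 2 ≤ J := by rw [hred]; exact (Ideal.mul_le_right : I * J ≤ J)
  haveI hfdI2 : FiniteDimensional k (R ⧸ I ^ 2) := by
    refine fd_of_powers _ (fun i => 2 * a i) (fun i => ?_)
    show MvPolynomial.X i ^ (2 * a i) ∈ I ^ 2
    rw [mul_comm, pow_mul]
    exact Ideal.pow_mem_pow (haI i) 2
  have hnJ : Module.finrank k (R ⧸ J) = ∏ i, a i := finrank_quot_J a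
  have hG1 := quot_dim_add k I (I ^ 2) hI2I hfdI2
  have hG2 := quot_dim_add k J (I ^ 2) hI2J hfdI2
  have hdimJ : idealQuotDim k J (I ^ 2) =
      d * Module.finrank k (R ⧸ I) := by
    rw [hred]
    exact dim_J_mod_IJ I a haI
  rw [hdimJ, hnJ] at hG2
  rw [hG2] at hG1
  constructor
  · have h1 : (idealQuotDim k I (I ^ 2) : ℤ) + Module.finrank k (R ⧸ I) =
        d * Module.finrank k (R ⧸ I) + ∏ i, a i := by
      exact_mod_cast congrArg (fun n : ℕ => (n : ℤ)) hG1.symm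
    push_cast at h1 ⊢
    linarith
  · rw [hnJ]; norm_cast
end
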